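/- arXiv:1006.4993 — 9 statements merged into one kernel-verified Lean document; each statement's English description precedes it below -/
import Mathlib

section
/- Let G be a connected locally finite infinite graph with constant vertex weight ω₀ > 0 and any positive edge conductance c. If g : V → ℝ satisfies Δ_{ω₀,c} g + g = 0 and there exists x₀ with g(x₀) > 0, then there exists a sequence of vertices (x_n) with (g(x_n)) strictly increasing; in particular g ∉ ℓ²(V). -/
open Finset

variable {V : Type*}

/-- Weighted Laplacian: `(Δ_{ω,c} f)(x) = (1/ω_x²) Σ_{y∼x} c_{xy}(f(x) − f(y))`. -/
noncomputable def lapW (G : SimpleGraph V) [∀ x : V, Fintype (G.neighborSet x)]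
    (ω : V → ℝ) (c : V → V → ℝ) (f : V → ℝ) (x : V) : ℝ :=
  (1 / (ω x) ^ 2) * ∑ y ∈ G.neighborFinset x, c x y * (f x - f y)

/-- Schrödinger operator: `(Δ_{1,a} + W) f (x) = Σ_{y∼x} a_{xy}(f(x) − f(y)) + W(x) f(x)`. -/
noncomputable def schrod (G : SimpleGraph V) [∀ x : V, Fintype (G.neighborSet x)]
    (a : V → V → ℝ) (W : V → ℝ) (f : V → ℝ) (x : V) : ℝ :=
  (∑ y ∈ G.neighborFinset x, a x y * (f x - f y)) + W x * f x

/-- if `Δ_{ω₀,c} g + g = 0` and `g(x₀) > 0`, there is a sequence of vertices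
starting at `x₀` along which `g` is strictly increasing; in particular `g ∉ ℓ²(V)`. -/
theorem stmt1 (G : SimpleGraph V) [∀ x : V, Fintype (G.neighborSet x)]
    (hG : G.Connected) [Infinite V]
    (ω₀ : ℝ) (hω : 0 < ω₀)
    (c : V → V → ℝ) (hc : ∀ x y, G.Adj x y → 0 < c x y)
    (hcs : ∀ x y, c x y = c y x)
    (g : V → ℝ) (hg : ∀ x, lapW G (fun _ => ω₀) c g x + g x = 0)
    (x₀ : V) (hx₀ : 0 < g x₀) :
    (∃ u : ℕ → V, u 0 = x₀ ∧ StrictMono fun n => g (u n)) ∧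
      ¬ Summable fun x => (g x) ^ 2 := by
  -- key step: every vertex with g x > 0 has a neighbor with strictly larger g value
  have key : ∀ x : V, 0 < g x → ∃ y, G.Adj x y ∧ g x < g y := by
    intro x hx
    by_contra hcon
    push_neg at hcon
    have hsum : ∑ y ∈ G.neighborFinset x, c x y * (g x - g y) = -(ω₀ ^ 2 * g x) := by
      have := hg x
      unfold lapW at this
      have hω2 : (ω₀ : ℝ) ^ 2 ≠ 0 := by positivity
      field_simp at this
      linarith
    have hneg : ∑ y ∈ G.neighborFinset x, c x y * (g x - g y) < 0 := by
      rw [hsum]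
      have := mul_pos (pow_pos hω 2) hx
      linarith
    have hge : (0 : ℝ) ≤ ∑ y ∈ G.neighborFinset x, c x y * (g x - g y) := by
      apply Finset.sum_nonneg
      intro y hy
      rw [SimpleGraph.mem_neighborFinset] at hy
      have := hcon y hy
      have := hc x y hy
      nlinarith
    linarith
  -- step function on vertices with positive value
  let step : {x : V // 0 < g x} → {x : V // 0 < g x} := fun x =>
    ⟨Classical.choose (key x.1 x.2),
      lt_trans x.2 (Classical.choose_spec (key x.1 x.2)).2⟩
  have hstep : ∀ x : {x : V // 0 < g x}, g x.1 < g (step x).1 := fun x =>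
    (Classical.choose_spec (key x.1 x.2)).2
  let v : ℕ → {x : V // 0 < g x} := fun n => step^[n] ⟨x₀, hx₀⟩
  let u : ℕ → V := fun n => (v n).1
  have hmono : StrictMono fun n => g (u n) := by
    apply strictMono_nat_of_lt_succ
    intro n
    have : v (n + 1) = step (v n) := Function.iterate_succ_apply' step n _
    simpa [u, this] using hstep (v n)
  have hu0 : u 0 = x₀ := rfl
  refine ⟨⟨u, hu0, hmono⟩, ?_⟩
  intro hsum
  have huinj : Function.Injective u := by
    intro m n h
    by_contra hne
    rcases lt_or_gt_of_ne hne with h' | h'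
    · exact absurd (congrArg g h) (ne_of_lt (hmono h'))
    · exact absurd (congrArg g h) (ne_of_gt (hmono h'))
  have hsum2 : Summable fun n : ℕ => (g (u n)) ^ 2 := hsum.comp_injective huinj
  have htend : Filter.Tendsto (fun n : ℕ => (g (u n)) ^ 2) Filter.atTop (nhds 0) :=
    hsum2.tendsto_atTop_zero
  have hlow : ∀ n, (g x₀) ^ 2 ≤ (g (u n)) ^ 2 := by
    intro n
    have h1 : g x₀ ≤ g (u n) := by
      have := hmono.monotone (Nat.zero_le n)
      simpa [hu0] using this
    nlinarith
  have : (g x₀) ^ 2 ≤ 0 := le_of_tendsto_of_tendsto' tendsto_const_nhds htend hlow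
  nlinarith
end

section
/- Let G be a connected locally finite infinite graph with constant vertex weight ω₀ > 0 and positive conductance c. Then the Laplacian Δ_{ω₀,c} with domain the finitely supported functions C₀(V) ⊂ ℓ²(V) is essentially self-adjoint; equivalently, the only ℓ²(V) solution g of Δ_{ω₀,c} g + g = 0 is g ≡ 0. -/
open Finset Filter Topology

variable {V : Type*}

/-! Maximum principle: an `ℓ²` function vanishes at infinity, so if it is positive somewhere it
attains its supremum. At a maximum `Δg ≥ 0` since the conductances are nonnegative, hence a
solution of `Δg + g = 0` satisfies `g = -Δg ≤ 0` there. Applying this to `g` and `-g` gives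
`g = 0`. -/

lemma exists_forall_ge_of_tendsto_cofinite {α : Type*} [TopologicalSpace α] [LinearOrder α]
    [OrderClosedTopology α] {f : V → α} {a : α} (hf : Tendsto f cofinite (𝓝 a)) {x₀ : V}
    (hx₀ : a < f x₀) : ∃ x, ∀ y, f y ≤ f x := by
  let _ : TopologicalSpace V := ⊥
  have : DiscreteTopology V := ⟨rfl⟩
  refine continuous_of_discreteTopology.exists_forall_ge' x₀ ?_
  rw [cocompact_eq_cofinite]
  exact hf.eventually_le_const hx₀

lemma tendsto_cofinite_zero_of_summable_sq {g : V → ℝ} (hg : Summable fun x => g x ^ 2) :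
    Tendsto g cofinite (𝓝 0) := by
  have h := hg.tendsto_cofinite_zero.sqrt
  simp only [Real.sqrt_sq_eq_abs, Real.sqrt_zero] at h
  exact (tendsto_zero_iff_abs_tendsto_zero g).2 h

section Laplacian

variable (G : SimpleGraph V) [∀ x : V, Fintype (G.neighborSet x)] (ω : V → ℝ) (c : V → V → ℝ)

lemma lapW_neg (g : V → ℝ) (x : V) : lapW G ω c (-g) x = -lapW G ω c g x := by
  simp only [lapW, Pi.neg_apply, ← mul_neg, ← sum_neg_distrib]
  congr 1
  exact sum_congr rfl fun _ _ => by ring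

variable {G c}

lemma lapW_nonneg_of_forall_le (hc : ∀ x y, G.Adj x y → 0 ≤ c x y) {g : V → ℝ} {x : V}
    (hx : ∀ y, g y ≤ g x) : 0 ≤ lapW G ω c g x := by
  refine mul_nonneg (by positivity) (sum_nonneg fun y hy => ?_)
  exact mul_nonneg (hc x y ((G.mem_neighborFinset x y).mp hy)) (sub_nonneg.mpr (hx y))

lemma nonpos_of_lapW_add_self_eq_zero (hc : ∀ x y, G.Adj x y → 0 ≤ c x y) {g : V → ℝ}
    (hg : Tendsto g cofinite (𝓝 0)) (heq : ∀ x, lapW G ω c g x + g x = 0) (x : V) :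
    g x ≤ 0 := by
  by_contra! hx
  obtain ⟨x₀, hx₀⟩ := exists_forall_ge_of_tendsto_cofinite hg hx
  have := lapW_nonneg_of_forall_le ω hc hx₀
  linarith [heq x₀, hx₀ x]

lemma eq_zero_of_lapW_add_self_eq_zero (hc : ∀ x y, G.Adj x y → 0 ≤ c x y) {g : V → ℝ}
    (hg : Tendsto g cofinite (𝓝 0)) (heq : ∀ x, lapW G ω c g x + g x = 0) : g = 0 := by
  have hneg : ∀ x, lapW G ω c (-g) x + (-g) x = 0 := fun x => by
    rw [lapW_neg, Pi.neg_apply, ← neg_add, heq, neg_zero]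
  funext x
  have hle := nonpos_of_lapW_add_self_eq_zero ω hc hg heq x
  have hge := nonpos_of_lapW_add_self_eq_zero ω hc (by rw [← neg_zero]; exact hg.neg) hneg x
  rw [Pi.neg_apply, neg_nonpos] at hge
  exact le_antisymm hle hge

end Laplacian

/-- with constant vertex weight `ω₀ > 0`, the Laplacian `Δ_{ω₀,c}` is
essentially self-adjoint on `C₀(V)`: the only `ℓ²` solution of `Δ_{ω₀,c} g + g = 0`
is `g ≡ 0`. -/
theorem stmt2 (G : SimpleGraph V) [∀ x : V, Fintype (G.neighborSet x)]
    (hG : G.Connected) [Infinite V]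
    (ω₀ : ℝ) (hω : 0 < ω₀)
    (c : V → V → ℝ) (hc : ∀ x y, G.Adj x y → 0 < c x y)
    (hcs : ∀ x y, c x y = c y x) :
    ∀ g : V → ℝ, Summable (fun x => ω₀ ^ 2 * (g x) ^ 2) →
      (∀ x, lapW G (fun _ => ω₀) c g x + g x = 0) → g = 0 := by
  intro g hsum heq
  have hsq : Summable fun x => g x ^ 2 := (summable_mul_left_iff (by positivity)).1 hsum
  exact eq_zero_of_lapW_add_self_eq_zero _ (fun x y h => (hc x y h).le)
    (tendsto_cofinite_zero_of_summable_sq hsq) heq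
end

section
/- Let G be a connected locally finite infinite graph, W : V → ℝ a potential bounded below, ω₀ > 0 a constant vertex weight, and c a positive conductance. Then for any real κ₁ with κ + κ₁ ≥ 1 (where κ is a lower bound for W), any g ∈ ℓ²(V) satisfying Δ_{ω₀,c} g + W g + κ₁ g = 0 is identically zero; hence Δ_{ω₀,c} + W is essentially self-adjoint on C₀(V). -/
open Finset

variable {V : Type*}

/-- with `W` bounded below by `κ` and `κ + κ₁ ≥ 1`, any `ℓ²` solution of
`Δ_{ω₀,c} g + W g + κ₁ g = 0` vanishes; hence `Δ_{ω₀,c} + W` is essentially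
self-adjoint on `C₀(V)`. -/
theorem stmt3 (G : SimpleGraph V) [∀ x : V, Fintype (G.neighborSet x)]
    (hG : G.Connected) [Infinite V]
    (ω₀ : ℝ) (hω : 0 < ω₀)
    (c : V → V → ℝ) (hc : ∀ x y, G.Adj x y → 0 < c x y)
    (hcs : ∀ x y, c x y = c y x)
    (W : V → ℝ) (κ : ℝ) (hκ : ∀ x, κ ≤ W x)
    (κ₁ : ℝ) (hκ₁ : 1 ≤ κ + κ₁) :
    ∀ g : V → ℝ, Summable (fun x => (g x) ^ 2) →
      (∀ x, lapW G (fun _ => ω₀) c g x + W x * g x + κ₁ * g x = 0) → g = 0 := by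
  intro g hsum heq
  by_contra hg
  obtain ⟨a, ha⟩ : ∃ a, g a ≠ 0 := by
    by_contra h; push_neg at h; exact hg (funext fun x => h x)
  have hpos : (0:ℝ) < (g a) ^ 2 := by positivity
  -- the set where (g x)^2 is at least (g a)^2 is finite
  have hev : ∀ᶠ x in Filter.cofinite, (g x) ^ 2 < (g a) ^ 2 :=
    hsum.tendsto_cofinite_zero.eventually_lt_const hpos
  have hfin : {x | ¬ (g x) ^ 2 < (g a) ^ 2}.Finite := Filter.eventually_cofinite.mp hev
  have hmem : a ∈ hfin.toFinset := by simp
  obtain ⟨x₀, hx₀, hmax⟩ := hfin.toFinset.exists_max_image (fun x => (g x) ^ 2) ⟨a, hmem⟩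
  -- x₀ maximizes (g x)^2 over all of V
  have hglob : ∀ y, (g y) ^ 2 ≤ (g x₀) ^ 2 := by
    intro y
    by_cases hy : y ∈ hfin.toFinset
    · exact hmax y hy
    · have : (g y) ^ 2 < (g a) ^ 2 := by
        simpa using (Set.Finite.mem_toFinset hfin).not.mp hy
      have ha2 : (g a) ^ 2 ≤ (g x₀) ^ 2 := hmax a hmem
      linarith
  have hx0sq : (g a) ^ 2 ≤ (g x₀) ^ 2 := hmax a hmem
  have hx0ne : g x₀ ≠ 0 := by
    intro h; rw [h] at hx0sq; nlinarith
  have hE := heq x₀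
  unfold lapW at hE
  set S := ∑ y ∈ G.neighborFinset x₀, c x₀ y * (g x₀ - g y) with hS
  have hω2 : (0:ℝ) < 1 / ω₀ ^ 2 := by positivity
  rcases lt_or_gt_of_ne hx0ne with hneg | hposx
  · -- g x₀ < 0 : every summand is ≤ 0
    have hSle : S ≤ 0 := by
      apply Finset.sum_nonpos
      intro y hy
      have hadj : G.Adj x₀ y := (SimpleGraph.mem_neighborFinset G x₀ y).mp hy
      have hcy := hc x₀ y hadj
      have : g x₀ ≤ g y := by nlinarith [hglob y, neg_abs_le (g y), le_abs_self (g y)]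
      nlinarith
    have h1 : (1 / ω₀ ^ 2) * S ≤ 0 := mul_nonpos_of_nonneg_of_nonpos hω2.le hSle
    have h2 : W x₀ * g x₀ + κ₁ * g x₀ ≤ g x₀ := by nlinarith [hκ x₀]
    linarith
  · -- g x₀ > 0 : every summand is ≥ 0
    have hSge : 0 ≤ S := by
      apply Finset.sum_nonneg
      intro y hy
      have hadj : G.Adj x₀ y := (SimpleGraph.mem_neighborFinset G x₀ y).mp hy
      have hcy := hc x₀ y hadj
      have : g y ≤ g x₀ := by nlinarith [hglob y, neg_abs_le (g y), le_abs_self (g y)]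
      nlinarith
    have h1 : 0 ≤ (1 / ω₀ ^ 2) * S := mul_nonneg hω2.le hSge
    have h2 : g x₀ ≤ W x₀ * g x₀ + κ₁ * g x₀ := by nlinarith [hκ x₀]
    linarith
end

section
/- Local Harnack inequality: Let P = Δ_{1,a} + W be a Schrödinger operator on a locally finite graph G, and K a finite subgraph whose interior K° = {x ∈ K : (y ∼ x ⟹ y ∈ K)} is connected. Then there exists a constant k > 0, depending only on K, a, W (not on φ), such that every φ : V → ℝ strictly positive on K with Pφ ≡ 0 on K° satisfies 1/k ≤ φ(x)/φ(y) ≤ k for all x, y ∈ K°. -/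
open Finset

variable {V : Type*}

/-- The interior of a set of vertices `K`: vertices of `K` all of whose neighbors lie in `K`. -/
def intr (G : SimpleGraph V) (K : Set V) : Set V :=
  {x | x ∈ K ∧ ∀ y, G.Adj x y → y ∈ K}

/-!
At an interior vertex `u` where `Pφ = 0` we have
`∑_{z ∼ u} a_{uz} φ(z) = (∑_{z ∼ u} a_{uz} + W(u)) φ(u)`, and since every term on the left is
positive, each neighbour satisfies `φ(v) ≤ c_{uv} φ(u)` with `c_{uv}` independent of `φ`. The
interior is finite, so one `M ≥ 1` bounds all these `c_{uv}`, and chaining the one-step bound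
along a path of length `< |K°|` in the connected interior gives `φ(x) ≤ M^{|K°|} φ(y)`.
-/

theorem SimpleGraph.Walk.le_pow_length_mul {α : Type*} {H : SimpleGraph α} {f : α → ℝ} {M : ℝ}
    (hM : 0 ≤ M) (hstep : ∀ u v, H.Adj u v → f u ≤ M * f v) {u v : α} (w : H.Walk u v) :
    f u ≤ M ^ w.length * f v := by
  induction w with
  | nil => simp
  | @cons u u' v h p ih =>
    calc f u ≤ M * f u' := hstep _ _ h
      _ ≤ M * (M ^ p.length * f v) := mul_le_mul_of_nonneg_left ih hM
      _ = M ^ (SimpleGraph.Walk.cons h p).length * f v := by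
        rw [SimpleGraph.Walk.length_cons]; ring

theorem SimpleGraph.Preconnected.le_pow_card_mul {α : Type*} [Fintype α] {H : SimpleGraph α}
    (hH : H.Preconnected) {f : α → ℝ} {M : ℝ} (hM : 1 ≤ M) (hf : ∀ u, 0 ≤ f u)
    (hstep : ∀ u v, H.Adj u v → f u ≤ M * f v) (u v : α) :
    f u ≤ M ^ Fintype.card α * f v := by
  classical
  obtain ⟨w⟩ := hH u v
  let p := w.toPath
  calc f u ≤ M ^ p.1.length * f v := p.1.le_pow_length_mul (by linarith) hstep
    _ ≤ M ^ Fintype.card α * f v :=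
      mul_le_mul_of_nonneg_right (pow_le_pow_right₀ hM p.2.length_lt.le) (hf v)

theorem schrod_eq (G : SimpleGraph V) [∀ x : V, Fintype (G.neighborSet x)]
    (a : V → V → ℝ) (W : V → ℝ) (φ : V → ℝ) (u : V) :
    schrod G a W φ u = (∑ z ∈ G.neighborFinset u, a u z + W u) * φ u
      - ∑ z ∈ G.neighborFinset u, a u z * φ z := by
  simp only [schrod, mul_sub, sum_sub_distrib, add_mul, sum_mul]
  ring

theorem le_div_mul_of_schrod_eq_zero (G : SimpleGraph V) [∀ x : V, Fintype (G.neighborSet x)]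
    {a : V → V → ℝ} (ha : ∀ x y, G.Adj x y → 0 < a x y) (W : V → ℝ) {φ : V → ℝ} {u v : V}
    (hφ : ∀ z, G.Adj u z → 0 ≤ φ z) (h0 : schrod G a W φ u = 0) (huv : G.Adj u v) :
    φ v ≤ (∑ z ∈ G.neighborFinset u, a u z + W u) / a u v * φ u := by
  have hv : v ∈ G.neighborFinset u := (G.mem_neighborFinset u v).2 huv
  have hsingle : a u v * φ v ≤ ∑ z ∈ G.neighborFinset u, a u z * φ z :=
    single_le_sum (f := fun z => a u z * φ z) (fun z hz =>
      have hz := (G.mem_neighborFinset u z).1 hz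
      mul_nonneg (ha u z hz).le (hφ z hz)) hv
  rw [schrod_eq, sub_eq_zero] at h0
  rw [div_mul_eq_mul_div, le_div_iff₀ (ha u v huv), mul_comm]
  linarith

theorem exists_one_le_forall_neighbor_le (G : SimpleGraph V)
    [∀ x : V, Fintype (G.neighborSet x)] {S : Set V} (hS : S.Finite) (g : V → V → ℝ) :
    ∃ M, 1 ≤ M ∧ ∀ u ∈ S, ∀ v, G.Adj u v → g u v ≤ M := by
  classical
  obtain ⟨M, hM⟩ := ((hS.toFinset.sigma fun u => G.neighborFinset u).image fun p => g p.1 p.2).exists_le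
  refine ⟨max M 1, le_max_right _ _, fun u hu v huv => (hM _ ?_).trans (le_max_left _ _)⟩
  exact mem_image.2 ⟨⟨u, v⟩,
    mem_sigma.2 ⟨hS.mem_toFinset.2 hu, (G.mem_neighborFinset u v).2 huv⟩, rfl⟩

/-- local Harnack inequality. -/
theorem stmt4 (G : SimpleGraph V) [∀ x : V, Fintype (G.neighborSet x)]
    (a : V → V → ℝ) (ha : ∀ x y, G.Adj x y → 0 < a x y)
    (has : ∀ x y, a x y = a y x) (W : V → ℝ)
    (K : Set V) (hK : K.Finite)
    (hconn : (G.induce (intr G K)).Preconnected) :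
    ∃ k > (0 : ℝ), ∀ φ : V → ℝ, (∀ x ∈ K, 0 < φ x) →
      (∀ x ∈ intr G K, schrod G a W φ x = 0) →
      ∀ x ∈ intr G K, ∀ y ∈ intr G K,
        1 / k ≤ φ x / φ y ∧ φ x / φ y ≤ k := by
  have hS : (intr G K).Finite := hK.subset fun x hx => hx.1
  have : Fintype (intr G K) := hS.fintype
  obtain ⟨M, hM, hcM⟩ := exists_one_le_forall_neighbor_le G hS
    fun u v => (∑ z ∈ G.neighborFinset u, a u z + W u) / a u v
  have hk : 0 < M ^ Fintype.card (intr G K) := by positivity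
  refine ⟨_, hk, fun φ hφ h0 x hx y hy => ?_⟩
  have hφS (z : intr G K) : 0 < φ z := hφ z z.2.1
  have harnack (u v : intr G K) : φ u ≤ M ^ Fintype.card (intr G K) * φ v := by
    refine hconn.le_pow_card_mul (f := fun z => φ z) hM (fun z => (hφS z).le)
      (fun u v huv => ?_) u v
    calc φ u ≤ _ := le_div_mul_of_schrod_eq_zero G ha W (fun z hz => (hφ z (v.2.2 z hz)).le)
          (h0 v v.2) huv.symm
      _ ≤ M * φ v := mul_le_mul_of_nonneg_right (hcM v v.2 u huv.symm) (hφS v).le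
  have hx' := hφS ⟨x, hx⟩
  have hy' := hφS ⟨y, hy⟩
  constructor
  · rw [div_le_div_iff₀ hk hy', one_mul]
    exact (harnack ⟨y, hy⟩ ⟨x, hx⟩).trans_eq (mul_comm _ _)
  · rw [div_le_iff₀ hy']
    exact harnack ⟨x, hx⟩ ⟨y, hy⟩
end

section
/- One-step Harnack estimate: Let P = Δ_{1,a} + W on a locally finite graph, K a finite subgraph, and φ strictly positive on K with Pφ = 0 on the interior of K. Set α = min{a_{rs} : r,s ∈ K, r∼s}, A = Σ_{r,s ∈ K, r∼s} a_{rs}, and k₀ = (max(0, max_K W) + A)/α. Then for every edge {x,y} with x, y in the interior of K, one has 1/k₀ ≤ φ(x)/φ(y) ≤ k₀. -/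
open Finset

variable {V : Type*}

/-- one-step Harnack estimate with the explicit constant
`k₀ = (max(0, max_K W) + A)/α`. -/
theorem stmt5 (G : SimpleGraph V) [∀ x : V, Fintype (G.neighborSet x)]
    [DecidableRel G.Adj]
    (a : V → V → ℝ) (ha : ∀ x y, G.Adj x y → 0 < a x y)
    (has : ∀ x y, a x y = a y x) (W : V → ℝ)
    (K : Finset V) (hK : K.Nonempty)
    (hP : ((K ×ˢ K).filter fun p => G.Adj p.1 p.2).Nonempty)
    (φ : V → ℝ) (hφ : ∀ x ∈ K, 0 < φ x)
    (hharm : ∀ x ∈ intr G (↑K : Set V), schrod G a W φ x = 0) :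
    ∀ x ∈ intr G (↑K : Set V), ∀ y ∈ intr G (↑K : Set V), G.Adj x y →
      1 / ((max 0 (K.sup' hK W) + ∑ p ∈ (K ×ˢ K).filter fun p => G.Adj p.1 p.2, a p.1 p.2) /
            ((K ×ˢ K).filter fun p => G.Adj p.1 p.2).inf' hP fun p => a p.1 p.2)
        ≤ φ x / φ y ∧
      φ x / φ y ≤
        (max 0 (K.sup' hK W) + ∑ p ∈ (K ×ˢ K).filter fun p => G.Adj p.1 p.2, a p.1 p.2) /
          ((K ×ˢ K).filter fun p => G.Adj p.1 p.2).inf' hP fun p => a p.1 p.2 := by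
  classical
  set E := (K ×ˢ K).filter fun p => G.Adj p.1 p.2 with hE
  set α := E.inf' hP fun p => a p.1 p.2 with hαdef
  set A := ∑ p ∈ E, a p.1 p.2 with hAdef
  set M := max 0 (K.sup' hK W) + A with hMdef
  have hEadj : ∀ p ∈ E, G.Adj p.1 p.2 := by
    intro p hp
    rw [hE, Finset.mem_filter] at hp
    exact hp.2
  have hα : 0 < α := by
    rw [hαdef, Finset.lt_inf'_iff]
    intro p hp
    exact ha p.1 p.2 (hEadj p hp)
  have hApos : 0 < A := by
    rw [hAdef]
    exact Finset.sum_pos (fun p hp => ha p.1 p.2 (hEadj p hp)) hP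
  have hM : 0 < M := by
    have : (0 : ℝ) ≤ max 0 (K.sup' hK W) := le_max_left _ _
    rw [hMdef]; linarith
  have key : ∀ x ∈ intr G (↑K : Set V), ∀ y, G.Adj x y → α * φ y ≤ M * φ x := by
    intro x hx y hxy
    have hxK : x ∈ K := hx.1
    have hyK : y ∈ K := hx.2 y hxy
    have hh := hharm x hx
    rw [schrod] at hh
    have hexp : ∑ z ∈ G.neighborFinset x, a x z * (φ x - φ z)
        = (∑ z ∈ G.neighborFinset x, a x z) * φ x
          - ∑ z ∈ G.neighborFinset x, a x z * φ z := by
      rw [Finset.sum_mul, ← Finset.sum_sub_distrib]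
      exact Finset.sum_congr rfl fun z _ => by ring
    have heq : ∑ z ∈ G.neighborFinset x, a x z * φ z
        = ((∑ z ∈ G.neighborFinset x, a x z) + W x) * φ x := by
      rw [hexp] at hh
      nlinarith [hh]
    have hmemE : (x, y) ∈ E := by
      rw [hE, Finset.mem_filter]
      exact ⟨Finset.mem_product.mpr ⟨hxK, hyK⟩, hxy⟩
    have h1 : α * φ y ≤ a x y * φ y := by
      apply mul_le_mul_of_nonneg_right _ (hφ y hyK).le
      exact Finset.inf'_le (fun p => a p.1 p.2) hmemE
    have h2 : a x y * φ y ≤ ∑ z ∈ G.neighborFinset x, a x z * φ z := by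
      apply Finset.single_le_sum (f := fun z => a x z * φ z)
        (fun z hz => mul_nonneg (ha x z (by simpa using hz)).le
          (hφ z (hx.2 z (by simpa using hz))).le)
      simpa using hxy
    have hS : (∑ z ∈ G.neighborFinset x, a x z) ≤ A := by
      rw [hAdef]
      have himg : ∑ p ∈ (G.neighborFinset x).image (fun z => (x, z)), a p.1 p.2
          = ∑ z ∈ G.neighborFinset x, a x z :=
        Finset.sum_image (fun u _ v _ h => by simpa using h)
      rw [← himg]
      apply Finset.sum_le_sum_of_subset_of_nonneg
      · intro p hp
        simp only [Finset.mem_image] at hp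
        obtain ⟨z, hz, rfl⟩ := hp
        rw [hE, Finset.mem_filter]
        exact ⟨Finset.mem_product.mpr ⟨hxK, hx.2 z (by simpa using hz)⟩, by simpa using hz⟩
      · intro p hp _
        exact (ha p.1 p.2 (hEadj p hp)).le
    have hW : W x ≤ max 0 (K.sup' hK W) := le_trans (Finset.le_sup' W hxK) (le_max_right _ _)
    calc α * φ y ≤ a x y * φ y := h1
      _ ≤ ∑ z ∈ G.neighborFinset x, a x z * φ z := h2
      _ = ((∑ z ∈ G.neighborFinset x, a x z) + W x) * φ x := heq
      _ ≤ M * φ x := by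
          apply mul_le_mul_of_nonneg_right _ (hφ x hxK).le
          rw [hMdef]; linarith
  intro x hx y hy hxy
  have hfx : 0 < φ x := hφ x hx.1
  have hfy : 0 < φ y := hφ y hy.1
  have k1 := key x hx y hxy
  have k2 := key y hy x hxy.symm
  constructor
  · rw [div_le_div_iff₀ (div_pos hM hα) hfy, one_mul]
    rw [mul_div_assoc', le_div_iff₀ hα]
    nlinarith [k1]
  · rw [div_le_div_iff₀ hfy hα]
    nlinarith [k2]
end

section
/- Existence of a positive harmonic function: Let P be a Schrödinger operator on a connected, locally finite infinite graph G such that ⟨Pf,f⟩ > 0 for every finitely supported f ≠ 0. Then there exists a function Φ : V → ℝ with Φ(x) > 0 for all x and PΦ ≡ 0 on V. -/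
open Finset

variable {V : Type*}

namespace Stmt9Aux

section Lin

variable (G : SimpleGraph V) [∀ x : V, Fintype (G.neighborSet x)]
variable (a : V → V → ℝ) (W : V → ℝ)

lemma schrod_sub (f g : V → ℝ) (x : V) :
    schrod G a W (f - g) x = schrod G a W f x - schrod G a W g x := by
  simp only [schrod, Pi.sub_apply]
  rw [Finset.sum_congr rfl (fun y _ => show a x y * ((f x - g x) - (f y - g y))
      = a x y * (f x - f y) - a x y * (g x - g y) by ring), Finset.sum_sub_distrib]
  ring

lemma schrod_add (f g : V → ℝ) (x : V) :
    schrod G a W (f + g) x = schrod G a W f x + schrod G a W g x := by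
  simp only [schrod, Pi.add_apply]
  rw [Finset.sum_congr rfl (fun y _ => show a x y * ((f x + g x) - (f y + g y))
      = a x y * (f x - f y) + a x y * (g x - g y) by ring), Finset.sum_add_distrib]
  ring

lemma schrod_smul (c : ℝ) (f : V → ℝ) (x : V) :
    schrod G a W (c • f) x = c * schrod G a W f x := by
  simp only [schrod, Pi.smul_apply, smul_eq_mul, mul_add, Finset.mul_sum]
  rw [Finset.sum_congr rfl (fun y _ => show a x y * (c * f x - c * f y)
      = c * (a x y * (f x - f y)) by ring)]
  ring

/-- Rewrite the energy as a finite sum when the second factor has support in `F`. -/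
lemma finsum_Q (F : Finset V) (f h : V → ℝ) (hh : Function.support h ⊆ ↑F) :
    ∑ᶠ x, schrod G a W f x * h x = ∑ x ∈ F, schrod G a W f x * h x := by
  apply finsum_eq_sum_of_support_subset
  intro x hx
  have : h x ≠ 0 := by
    intro h0
    apply hx
    simp [h0]
  exact hh this

/-- The "diagonal" is positive: `deg x + W x > 0`. -/
lemma dW_pos
    (hpos : ∀ f : V → ℝ, (Function.support f).Finite → f ≠ 0 →
      0 < ∑ᶠ x, schrod G a W f x * f x) (x : V) :
    0 < (∑ y ∈ G.neighborFinset x, a x y) + W x := by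
  classical
  set f : V → ℝ := fun y => if y = x then 1 else 0 with hf
  have hsupp : Function.support f ⊆ ↑({x} : Finset V) := by
    intro y hy
    simp only [Function.mem_support, hf] at hy
    by_contra hc
    simp only [coe_singleton, Set.mem_singleton_iff] at hc
    exact hy (if_neg hc)
  have hne : f ≠ 0 := by
    intro h0
    have := congrFun h0 x
    simp [hf] at this
  have h1 := hpos f ((Finset.finite_toSet _).subset hsupp) hne
  rw [finsum_Q G a W {x} f f hsupp, Finset.sum_singleton] at h1
  have hfx : f x = 1 := by simp [hf]
  have hsch : schrod G a W f x = (∑ y ∈ G.neighborFinset x, a x y) + W x := by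
    simp only [schrod, hfx]
    rw [Finset.sum_congr rfl (fun y hy => by
      have hne' : y ≠ x := by
        have hadj := (SimpleGraph.mem_neighborFinset G x y).mp hy
        exact fun h => (G.irrefl (h ▸ hadj))
      show a x y * (1 - f y) = a x y
      simp [hf, hne'])]
    ring
  rw [hsch, hfx, mul_one] at h1
  exact h1

/-- Basic Harnack-type step: if `u ≥ 0` and `(Pu)(w) ≥ 0`, then for any neighbor `x` of `w`,
`a w x * u x ≤ (deg w + W w) * u w`. -/
lemma step (ha : ∀ x y, G.Adj x y → 0 < a x y) (u : V → ℝ) (hu : ∀ y, 0 ≤ u y)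
    {w x : V} (hadj : G.Adj w x) (hs : 0 ≤ schrod G a W u w) :
    a w x * u x ≤ ((∑ y ∈ G.neighborFinset w, a w y) + W w) * u w := by
  have e : schrod G a W u w
      = ((∑ y ∈ G.neighborFinset w, a w y) + W w) * u w
        - ∑ y ∈ G.neighborFinset w, a w y * u y := by
    simp only [schrod, mul_sub, Finset.sum_sub_distrib, ← Finset.sum_mul]
    ring
  have h1 : ∑ y ∈ G.neighborFinset w, a w y * u y
      ≤ ((∑ y ∈ G.neighborFinset w, a w y) + W w) * u w := by linarith [e ▸ hs]
  have h2 : a w x * u x ≤ ∑ y ∈ G.neighborFinset w, a w y * u y := by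
    apply Finset.single_le_sum (f := fun y => a w y * u y)
    · intro y hy
      exact mul_nonneg (le_of_lt (ha w y ((SimpleGraph.mem_neighborFinset G w y).mp hy))) (hu y)
    · exact (SimpleGraph.mem_neighborFinset G w x).mpr hadj
  linarith

open Classical in
lemma exists_green (ha : ∀ x y, G.Adj x y → 0 < a x y)
    (hpos : ∀ f : V → ℝ, (Function.support f).Finite → f ≠ 0 →
      0 < ∑ᶠ x, schrod G a W f x * f x)
    (F : Finset V) (p : V) (hp : p ∈ F) :
    ∃ v : V → ℝ, (∀ x, 0 ≤ v x) ∧ (∀ x ∉ F, v x = 0) ∧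
      (∀ x ∈ F, schrod G a W v x = if x = p then 1 else 0) ∧ 0 < v p := by
  classical
  -- extension by zero
  let E : (↥F → ℝ) → (V → ℝ) := fun g x => if h : x ∈ F then g ⟨x, h⟩ else 0
  have hEadd : ∀ g h : ↥F → ℝ, E (g + h) = E g + E h := by
    intro g h
    funext x
    simp only [E, Pi.add_apply]
    split <;> simp
  have hEsmul : ∀ (c : ℝ) (g : ↥F → ℝ), E (c • g) = c • E g := by
    intro c g
    funext x
    simp only [E, Pi.smul_apply, smul_eq_mul]
    split <;> simp
  have hEmem : ∀ (g : ↥F → ℝ) (s : ↥F), E g (s : V) = g s := by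
    intro g s
    simp only [E, dif_pos s.2]
  have hEsupp : ∀ g : ↥F → ℝ, Function.support (E g) ⊆ ↑F := by
    intro g x hx
    by_contra hxF
    exact hx (dif_neg hxF)
  let T : (↥F → ℝ) →ₗ[ℝ] (↥F → ℝ) :=
    { toFun := fun g s => schrod G a W (E g) s
      map_add' := by
        intro g h
        funext s
        show schrod G a W (E (g + h)) ↑s = schrod G a W (E g) ↑s + schrod G a W (E h) ↑s
        rw [hEadd]
        exact schrod_add G a W (E g) (E h) s
      map_smul' := by
        intro c g
        funext s
        simp only [RingHom.id_apply, Pi.smul_apply, smul_eq_mul]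
        show schrod G a W (E (c • g)) ↑s = c * schrod G a W (E g) ↑s
        rw [hEsmul]
        exact schrod_smul G a W c (E g) s }
  have hTinj : Function.Injective T := by
    rw [injective_iff_map_eq_zero]
    intro g hg
    by_contra hne
    have hEne : E g ≠ 0 := by
      intro h0
      apply hne
      funext s
      have := congrFun h0 (s : V)
      rw [hEmem] at this
      exact this
    have h1 := hpos (E g) ((Finset.finite_toSet F).subset (hEsupp g)) hEne
    rw [finsum_Q G a W F (E g) (E g) (hEsupp g)] at h1
    have h2 : ∑ x ∈ F, schrod G a W (E g) x * E g x = 0 := by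
      apply Finset.sum_eq_zero
      intro x hx
      have : schrod G a W (E g) x = 0 := congrFun hg ⟨x, hx⟩
      rw [this, zero_mul]
    rw [h2] at h1
    exact lt_irrefl _ h1
  obtain ⟨g, hg⟩ := LinearMap.injective_iff_surjective.mp hTinj
    (fun s : ↥F => if (s : V) = p then 1 else 0)
  set v : V → ℝ := E g with hv
  have hv0 : ∀ x ∉ F, v x = 0 := fun x hx => dif_neg hx
  have hsolve : ∀ x ∈ F, schrod G a W v x = if x = p then 1 else 0 := by
    intro x hx
    have := congrFun hg ⟨x, hx⟩
    exact this
  -- nonnegativity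
  have hvnn : ∀ x, 0 ≤ v x := by
    by_contra hcon
    push_neg at hcon
    obtain ⟨x0, hx0⟩ := hcon
    set u : V → ℝ := fun x => max (-(v x)) 0 with hu
    set w : V → ℝ := fun x => max (v x) 0 with hw
    have hunn : ∀ x, 0 ≤ u x := fun x => le_max_right _ _
    have hwnn : ∀ x, 0 ≤ w x := fun x => le_max_right _ _
    have hwu : u = w - v := by
      funext x
      simp only [hu, hw, Pi.sub_apply]
      rcases le_total (v x) 0 with h | h
      · rw [max_eq_left (neg_nonneg.mpr h), max_eq_right h]
        ring
      · rw [max_eq_right (neg_nonpos.mpr h), max_eq_left h]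
        ring
    have hune : u ≠ 0 := by
      intro h0
      have h1 := congrFun h0 x0
      simp only [Pi.zero_apply] at h1
      have h2 : -(v x0) ≤ u x0 := le_max_left _ _
      rw [h1] at h2
      linarith
    have husupp : Function.support u ⊆ ↑F := by
      intro x hx
      by_contra hxF
      apply hx
      simp [hu, hv0 x hxF]
    have h1 := hpos u ((Finset.finite_toSet F).subset husupp) hune
    rw [finsum_Q G a W F u u husupp] at h1
    have hs : ∀ x, schrod G a W u x = schrod G a W w x - schrod G a W v x := by
      intro x
      rw [hwu]
      exact schrod_sub G a W w v x
    have hsum : (∑ x ∈ F, schrod G a W u x * u x)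
        = (∑ x ∈ F, schrod G a W w x * u x) - ∑ x ∈ F, schrod G a W v x * u x := by
      rw [← Finset.sum_sub_distrib]
      exact Finset.sum_congr rfl fun x _ => by rw [hs]; ring
    have h2 : ∑ x ∈ F, schrod G a W v x * u x = u p := by
      rw [Finset.sum_congr rfl (fun x hx => by rw [hsolve x hx])]
      rw [Finset.sum_congr rfl (fun x _ => show (if x = p then (1:ℝ) else 0) * u x
          = if x = p then u x else 0 by split <;> simp)]
      rw [Finset.sum_ite_eq' F p u, if_pos hp]
    have h3 : ∑ x ∈ F, schrod G a W w x * u x ≤ 0 := by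
      apply Finset.sum_nonpos
      intro x _
      rcases eq_or_lt_of_le (hunn x) with h | h
      · rw [← h, mul_zero]
      · have hvx : v x < 0 := by
          by_contra hc
          push_neg at hc
          have : u x = 0 := by simp [hu, max_eq_right, neg_nonpos.mpr hc]
          linarith
        have hwx : w x = 0 := by simp [hw, max_eq_right hvx.le]
        have hsw : schrod G a W w x ≤ 0 := by
          simp only [schrod, hwx, mul_zero, add_zero]
          apply Finset.sum_nonpos
          intro y hy
          have : (0:ℝ) - w y ≤ 0 := by linarith [hwnn y]
          exact mul_nonpos_of_nonneg_of_nonpos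
            (le_of_lt (ha x y ((SimpleGraph.mem_neighborFinset G x y).mp hy))) this
        exact mul_nonpos_of_nonpos_of_nonneg hsw h.le
    have hup : 0 ≤ u p := hunn p
    rw [hsum, h2] at h1
    linarith
  -- positivity at p
  have hvp : 0 < v p := by
    have h := hsolve p hp
    rw [if_pos rfl] at h
    have e : schrod G a W v p
        = ((∑ y ∈ G.neighborFinset p, a p y) + W p) * v p
          - ∑ y ∈ G.neighborFinset p, a p y * v y := by
      simp only [schrod, mul_sub, Finset.sum_sub_distrib, ← Finset.sum_mul]
      ring
    have hnn : 0 ≤ ∑ y ∈ G.neighborFinset p, a p y * v y := by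
      apply Finset.sum_nonneg
      intro y hy
      exact mul_nonneg (le_of_lt (ha p y ((SimpleGraph.mem_neighborFinset G p y).mp hy))) (hvnn y)
    have hprod : 0 < ((∑ y ∈ G.neighborFinset p, a p y) + W p) * v p := by
      rw [e] at h
      linarith
    by_contra hc
    push_neg at hc
    have hdw := dW_pos G a W hpos p
    nlinarith
  exact ⟨v, hvnn, hv0, hsolve, hvp⟩

end Lin

section Dist

variable (G : SimpleGraph V)

lemma exists_pred (hG : G.Connected) {o x : V} {n : ℕ} (h : G.dist o x = n + 1) :
    ∃ y, G.Adj y x ∧ G.dist o y = n := by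
  obtain ⟨q, hq⟩ := hG.exists_walk_length_eq_dist x o
  have hxo : G.dist x o = n + 1 := by rw [SimpleGraph.dist_comm]; exact h
  cases q with
  | nil =>
    rw [SimpleGraph.Walk.length_nil, hxo] at hq
    omega
  | cons hadj q' =>
    rename_i y
    rw [SimpleGraph.Walk.length_cons, hxo] at hq
    have hq' : q'.length = n := by omega
    have h1 : G.dist o y ≤ n := by
      have := SimpleGraph.dist_le q'.reverse
      rw [SimpleGraph.Walk.length_reverse, hq'] at this
      exact this
    have hyx : G.dist y x = 1 := SimpleGraph.dist_eq_one_iff_adj.mpr hadj.symm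
    have h2 : n ≤ G.dist o y := by
      have htri := hG.dist_triangle (u := o) (v := y) (w := x)
      rw [hyx, h] at htri
      omega
    exact ⟨y, hadj.symm, le_antisymm h1 h2⟩

lemma ball_finite [∀ x : V, Fintype (G.neighborSet x)] (hG : G.Connected) (o : V) :
    ∀ n : ℕ, {x : V | G.dist o x ≤ n}.Finite := by
  intro n
  induction n with
  | zero =>
    apply (Set.finite_singleton o).subset
    intro x hx
    simp only [Set.mem_setOf_eq, Nat.le_zero] at hx
    have := hG.dist_eq_zero_iff.mp hx
    simp [this.symm]
  | succ n ih =>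
    apply Set.Finite.subset (ih.union (ih.biUnion fun y _ => (G.neighborSet y).toFinite))
    intro x hx
    simp only [Set.mem_setOf_eq] at hx
    rcases Nat.lt_or_ge (G.dist o x) (n + 1) with h | h
    · left
      exact Nat.lt_succ_iff.mp h
    · right
      have hd : G.dist o x = n + 1 := le_antisymm hx h
      obtain ⟨y, hadj, hy⟩ := exists_pred G hG hd
      exact Set.mem_biUnion (by simp [hy]) hadj

lemma descend (hG : G.Connected) (o : V) :
    ∀ m : ℕ, ∀ x : V, G.dist o x = m → ∀ k ≤ m, ∃ y, G.dist o y = k := by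
  intro m
  induction m with
  | zero =>
    intro x _ k hk
    interval_cases k
    exact ⟨o, SimpleGraph.dist_self⟩
  | succ m ih =>
    intro x h k hk
    rcases Nat.eq_or_lt_of_le hk with rfl | hlt
    · exact ⟨x, h⟩
    · obtain ⟨y, _, hy⟩ := exists_pred G hG h
      exact ih y hy k (Nat.lt_succ_iff.mp hlt)

lemma exists_dist [∀ x : V, Fintype (G.neighborSet x)] [Infinite V]
    (hG : G.Connected) (o : V) (n : ℕ) : ∃ x, G.dist o x = n := by
  have h1 : ∃ x, ¬ (G.dist o x ≤ n) := by
    by_contra hc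
    push_neg at hc
    have : (Set.univ : Set V).Finite :=
      (ball_finite G hG o n).subset fun x _ => hc x
    exact Set.infinite_univ this
  obtain ⟨x, hx⟩ := h1
  push_neg at hx
  exact descend G hG o (G.dist o x) x rfl n hx.le

end Dist

end Stmt9Aux

/-- existence of a strictly positive `P`-harmonic function. -/
theorem stmt9 (G : SimpleGraph V) [∀ x : V, Fintype (G.neighborSet x)]
    (hG : G.Connected) [Infinite V]
    (a : V → V → ℝ) (ha : ∀ x y, G.Adj x y → 0 < a x y)
    (has : ∀ x y, a x y = a y x) (W : V → ℝ)
    (hpos : ∀ f : V → ℝ, (Function.support f).Finite → f ≠ 0 →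
      0 < ∑ᶠ x, schrod G a W f x * f x) :
    ∃ Φ : V → ℝ, (∀ x, 0 < Φ x) ∧ ∀ x, schrod G a W Φ x = 0 := by
  classical
  obtain ⟨o⟩ : Nonempty V := inferInstance
  have hdW : ∀ x, 0 < (∑ y ∈ G.neighborFinset x, a x y) + W x := Stmt9Aux.dW_pos G a W hpos
  -- predecessor function towards `o`
  have hpred0 : ∀ x : V, ∃ y : V, ∀ n : ℕ, G.dist o x = n + 1 → G.Adj y x ∧ G.dist o y = n := by
    intro x
    by_cases h : G.dist o x = 0
    · exact ⟨o, fun n hn => absurd (h ▸ hn) (by omega)⟩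
    · obtain ⟨m, hm⟩ : ∃ m, G.dist o x = m + 1 := ⟨G.dist o x - 1, by omega⟩
      obtain ⟨y, hadj, hy⟩ := Stmt9Aux.exists_pred G hG hm
      refine ⟨y, fun n hn => ?_⟩
      rw [hm] at hn
      obtain rfl : n = m := by omega
      exact ⟨hadj, hy⟩
  choose pred hpred using hpred0
  -- Harnack constants
  let κ : V → V → ℝ := fun w x => ((∑ y ∈ G.neighborFinset w, a w y) + W w) / a w x
  let Cf : ℕ → V → ℝ := fun n => Nat.rec (motive := fun _ => V → ℝ) (fun _ => 1)
      (fun _ Fn x => Fn (pred x) * κ (pred x) x) n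
  let C : V → ℝ := fun x => Cf (G.dist o x) x
  have hCo : C o = 1 := by
    show Cf (G.dist o o) o = 1
    rw [SimpleGraph.dist_self]
    rfl
  have hCsucc : ∀ x n, G.dist o x = n + 1 → C x = C (pred x) * κ (pred x) x := by
    intro x n hx
    have hpx := (hpred x n hx).2
    show Cf (G.dist o x) x = Cf (G.dist o (pred x)) (pred x) * κ (pred x) x
    rw [hx, hpx]
  have hCpos : ∀ x, 0 < C x := by
    have key : ∀ n x, G.dist o x = n → 0 < C x := by
      intro n
      induction n with
      | zero =>
        intro x hx
        rw [← hG.dist_eq_zero_iff.mp hx, hCo]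
        norm_num
      | succ n ih =>
        intro x hx
        obtain ⟨hadj, hpx⟩ := hpred x n hx
        rw [hCsucc x n hx]
        exact mul_pos (ih (pred x) hpx) (div_pos (hdW (pred x)) (ha _ _ hadj))
    intro x
    exact key _ x rfl
  -- Harnack chain bound
  have harnack : ∀ (n : ℕ) (u : V → ℝ), (∀ y, 0 ≤ u y) → u o ≤ 1 →
      (∀ w, G.dist o w ≤ n → schrod G a W u w = 0) →
      ∀ k, k ≤ n + 1 → ∀ x, G.dist o x = k → u x ≤ C x := by
    intro n u hu huo hh k
    induction k with
    | zero =>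
      intro _ x hx
      rw [← hG.dist_eq_zero_iff.mp hx, hCo]
      exact huo
    | succ k ih =>
      intro hk x hx
      obtain ⟨hadj, hpx⟩ := hpred x k hx
      have hsch : schrod G a W u (pred x) = 0 := hh (pred x) (by omega)
      have hst := Stmt9Aux.step G a W ha u hu hadj (le_of_eq hsch.symm)
      have hCw := ih (by omega) (pred x) hpx
      have haw := ha _ _ hadj
      have h1 : a (pred x) x * u x
          ≤ ((∑ y ∈ G.neighborFinset (pred x), a (pred x) y) + W (pred x)) * C (pred x) := by
        calc a (pred x) x * u x
            ≤ ((∑ y ∈ G.neighborFinset (pred x), a (pred x) y) + W (pred x)) * u (pred x) := hst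
          _ ≤ ((∑ y ∈ G.neighborFinset (pred x), a (pred x) y) + W (pred x)) * C (pred x) :=
              mul_le_mul_of_nonneg_left hCw (hdW (pred x)).le
      rw [hCsucc x k hx]
      have hκ : C (pred x) * κ (pred x) x
          = (((∑ y ∈ G.neighborFinset (pred x), a (pred x) y) + W (pred x)) * C (pred x))
            / a (pred x) x := by
        show C (pred x) * (((∑ y ∈ G.neighborFinset (pred x), a (pred x) y) + W (pred x))
            / a (pred x) x) = _
        ring
      rw [hκ, le_div_iff₀ haw, mul_comm]
      exact h1
  -- construction of approximate solutions
  have hstep2 : ∀ n : ℕ, ∃ Φ : V → ℝ, (∀ x, 0 ≤ Φ x) ∧ Φ o = 1 ∧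
      (∀ x, G.dist o x ≤ n → schrod G a W Φ x = 0) ∧ (∀ x, Φ x ≤ C x) := by
    intro n
    obtain ⟨p, hpdist⟩ := Stmt9Aux.exists_dist G hG o (n + 1)
    set Fs : Finset V := (Stmt9Aux.ball_finite G hG o (n + 1)).toFinset with hFs
    have hmem : ∀ x, x ∈ Fs ↔ G.dist o x ≤ n + 1 := by
      intro x
      simp [hFs, Set.Finite.mem_toFinset]
    have hpF : p ∈ Fs := (hmem p).mpr (le_of_eq hpdist)
    obtain ⟨v, hvnn, hv0, hsolve, hvp⟩ := Stmt9Aux.exists_green G a W ha hpos Fs p hpF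
    have hvF : ∀ x ∈ Fs, 0 ≤ schrod G a W v x := by
      intro x hx
      rw [hsolve x hx]
      split <;> norm_num
    have hiter : ∀ j : ℕ, j ≤ n + 1 →
        G.dist o (pred^[j] p) = n + 1 - j ∧ 0 < v (pred^[j] p) := by
      intro j
      induction j with
      | zero =>
        intro _
        refine ⟨?_, ?_⟩
        · simpa using hpdist
        · simpa using hvp
      | succ j ih =>
        intro hj
        obtain ⟨hd1, hv1⟩ := ih (by omega)
        have hd2 : G.dist o (pred^[j] p) = (n - j) + 1 := by omega
        obtain ⟨hadj, hpd⟩ := hpred (pred^[j] p) (n - j) hd2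
        have hit : pred^[j + 1] p = pred (pred^[j] p) := Function.iterate_succ_apply' pred j p
        refine ⟨by rw [hit, hpd]; omega, ?_⟩
        rw [hit]
        have hwF : pred (pred^[j] p) ∈ Fs := (hmem _).mpr (by rw [hpd]; omega)
        have hst := Stmt9Aux.step G a W ha v hvnn hadj (hvF _ hwF)
        have haw := ha _ _ hadj
        by_contra hc
        push_neg at hc
        have h2 : ((∑ y ∈ G.neighborFinset (pred (pred^[j] p)), a (pred (pred^[j] p)) y)
            + W (pred (pred^[j] p))) * v (pred (pred^[j] p)) ≤ 0 :=
          mul_nonpos_of_nonneg_of_nonpos (hdW _).le hc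
        have h3 : 0 < a (pred (pred^[j] p)) (pred^[j] p) * v (pred^[j] p) := mul_pos haw hv1
        linarith
    have hvo : 0 < v o := by
      obtain ⟨hd1, hv1⟩ := hiter (n + 1) le_rfl
      have hz : G.dist o (pred^[n + 1] p) = 0 := by omega
      rwa [← hG.dist_eq_zero_iff.mp hz] at hv1
    set u : V → ℝ := (v o)⁻¹ • v with hu
    have hun : ∀ y, 0 ≤ u y := by
      intro y
      rw [hu]
      simp only [Pi.smul_apply, smul_eq_mul]
      exact mul_nonneg (inv_nonneg.mpr hvo.le) (hvnn y)
    have huo : u o = 1 := by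
      rw [hu]
      simp only [Pi.smul_apply, smul_eq_mul]
      exact inv_mul_cancel₀ (ne_of_gt hvo)
    have hh : ∀ x, G.dist o x ≤ n → schrod G a W u x = 0 := by
      intro x hx
      rw [hu, Stmt9Aux.schrod_smul]
      have hxF : x ∈ Fs := (hmem x).mpr (by omega)
      have hxp : x ≠ p := by
        intro h
        rw [h, hpdist] at hx
        omega
      rw [hsolve x hxF, if_neg hxp, mul_zero]
    refine ⟨u, hun, huo, hh, ?_⟩
    intro x
    by_cases hxF : x ∈ Fs
    · exact harnack n u hun huo.le hh (G.dist o x) ((hmem x).mp hxF) x rfl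
    · have hz : v x = 0 := hv0 x hxF
      have : u x = 0 := by
        rw [hu]
        simp [hz]
      rw [this]
      exact (hCpos x).le
  choose Φseq hΦ using hstep2
  -- compactness argument
  set S : ℕ → Set (V → ℝ) := fun n => {Φ | (∀ x, Φ x ∈ Set.Icc (0:ℝ) (C x)) ∧ Φ o = 1 ∧
      ∀ x, G.dist o x ≤ n → schrod G a W Φ x = 0} with hS
  have hS_sub : ∀ n, S (n + 1) ⊆ S n := by
    intro n Φ hΦ'
    exact ⟨hΦ'.1, hΦ'.2.1, fun x hx => hΦ'.2.2 x (by omega)⟩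
  have hS_ne : ∀ n, (S n).Nonempty := by
    intro n
    obtain ⟨h1, h2, h3, h4⟩ := hΦ n
    exact ⟨Φseq n, fun x => ⟨h1 x, h4 x⟩, h2, h3⟩
  have hcont : ∀ x : V, Continuous fun Φ : V → ℝ => schrod G a W Φ x := by
    intro x
    unfold schrod
    apply Continuous.add
    · apply continuous_finset_sum
      intro y _
      exact continuous_const.mul ((continuous_apply x).sub (continuous_apply y))
    · exact continuous_const.mul (continuous_apply x)
  have hS_closed : ∀ n, IsClosed (S n) := by
    intro n
    have e : S n = (⋂ x : V, {Φ : V → ℝ | Φ x ∈ Set.Icc (0:ℝ) (C x)}) ∩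
        ({Φ : V → ℝ | Φ o = 1} ∩
          ⋂ x ∈ {x : V | G.dist o x ≤ n}, {Φ : V → ℝ | schrod G a W Φ x = 0}) := by
      ext Φ
      simp only [hS, Set.mem_setOf_eq, Set.mem_inter_iff, Set.mem_iInter]
    rw [e]
    refine IsClosed.inter (isClosed_iInter fun x => ?_)
      (IsClosed.inter ?_ (isClosed_biInter fun x _ => ?_))
    · exact IsClosed.preimage (continuous_apply x) isClosed_Icc
    · exact isClosed_eq (continuous_apply o) continuous_const
    · exact isClosed_eq (hcont x) continuous_const
  have hS_box : S 0 ⊆ Set.pi Set.univ (fun x => Set.Icc (0:ℝ) (C x)) :=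
    fun Φ hΦ' x _ => hΦ'.1 x
  have hS0_cpt : IsCompact (S 0) :=
    IsCompact.of_isClosed_subset (isCompact_univ_pi fun x => isCompact_Icc)
      (hS_closed 0) hS_box
  obtain ⟨Φ, hΦmem⟩ := IsCompact.nonempty_iInter_of_sequence_nonempty_isCompact_isClosed
    S hS_sub hS_ne hS0_cpt hS_closed
  simp only [Set.mem_iInter] at hΦmem
  have hΦharm : ∀ x, schrod G a W Φ x = 0 := fun x => (hΦmem (G.dist o x)).2.2 x le_rfl
  have hΦnn : ∀ x, 0 ≤ Φ x := fun x => ((hΦmem 0).1 x).1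
  have hΦo : Φ o = 1 := (hΦmem 0).2.1
  have hΦpos : ∀ n, ∀ x, G.dist o x = n → 0 < Φ x := by
    intro n
    induction n with
    | zero =>
      intro x hx
      rw [← hG.dist_eq_zero_iff.mp hx, hΦo]
      norm_num
    | succ n ih =>
      intro x hx
      obtain ⟨hadj, hpd⟩ := hpred x n hx
      have hw := ih (pred x) hpd
      have hst := Stmt9Aux.step G a W ha Φ hΦnn hadj.symm (le_of_eq (hΦharm x).symm)
      have haw := ha x (pred x) hadj.symm
      by_contra hc
      push_neg at hc
      have h2 : ((∑ y ∈ G.neighborFinset x, a x y) + W x) * Φ x ≤ 0 :=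
        mul_nonpos_of_nonneg_of_nonpos (hdW x).le hc
      have h3 : 0 < a x (pred x) * Φ (pred x) := mul_pos haw hw
      linarith
  exact ⟨Φ, fun x => hΦpos (G.dist o x) x rfl, hΦharm⟩
end

section
/- Agmon-type identity: Let H = Δ_{1,a} + W be a Schrödinger operator on a locally finite graph, λ ∈ ℝ, and v : V → ℝ with (H − λ)v = 0 pointwise. Then for every finitely supported f : V → ℝ, ⟨fv, (H−λ)(fv)⟩_{ℓ²} = Σ_{{x,y} ∈ E} a_{xy} v(x) v(y) (f(x) − f(y))² = (1/2) Σ_{x ∈ V} v(x) Σ_{y∼x} a_{xy} v(y) (f(x) − f(y))². -/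
open Finset

variable {V : Type*}

/-- Agmon-type identity. -/
theorem stmt11 (G : SimpleGraph V) [∀ x : V, Fintype (G.neighborSet x)]
    (a : V → V → ℝ) (ha : ∀ x y, G.Adj x y → 0 < a x y)
    (has : ∀ x y, a x y = a y x) (W : V → ℝ)
    (lam : ℝ) (v : V → ℝ) (hv : ∀ x, schrod G a W v x = lam * v x)
    (f : V → ℝ) (hf : (Function.support f).Finite) :
    (∑ᶠ x, (f x * v x) * (schrod G a W (fun y => f y * v y) x - lam * (f x * v x))
        = ∑ᶠ e ∈ G.edgeSet,
            Sym2.lift ⟨fun x y => a x y * (v x * v y) * (f x - f y) ^ 2,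
              fun x y => by dsimp only; rw [has x y]; ring⟩ e) ∧
    ∑ᶠ x, (f x * v x) * (schrod G a W (fun y => f y * v y) x - lam * (f x * v x))
        = (1 / 2) * ∑ᶠ x, v x * ∑ y ∈ G.neighborFinset x, a x y * v y * (f x - f y) ^ 2 := by
  classical
  -- pointwise identity
  have key : ∀ x, (f x * v x) * (schrod G a W (fun y => f y * v y) x - lam * (f x * v x))
      = ∑ y ∈ G.neighborFinset x, a x y * v x * v y * f x * (f x - f y) := by
    intro x
    have h1 : schrod G a W (fun y => f y * v y) x - lam * (f x * v x)
        = ∑ y ∈ G.neighborFinset x, a x y * v y * (f x - f y) := by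
      have h := hv x
      simp only [schrod] at h ⊢
      have hW : W x * v x = lam * v x - ∑ y ∈ G.neighborFinset x, a x y * (v x - v y) := by
        linarith
      have expand : ∀ y ∈ G.neighborFinset x, a x y * (f x * v x - f y * v y)
          = a x y * v y * (f x - f y) + f x * (a x y * (v x - v y)) := by
        intro y _; ring
      rw [Finset.sum_congr rfl expand, Finset.sum_add_distrib, ← Finset.mul_sum]
      have hWx : W x * (f x * v x) = f x * (W x * v x) := by ring
      rw [hWx, hW]; ring
    rw [h1, Finset.mul_sum]
    exact Finset.sum_congr rfl fun y _ => by ring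
  -- the finite set containing everything relevant
  set t : Finset V := hf.toFinset ∪ hf.toFinset.biUnion (fun z => G.neighborFinset z) with ht
  have hfs : ∀ x, f x ≠ 0 → x ∈ t := fun x hx =>
    Finset.mem_union_left _ (hf.mem_toFinset.2 hx)
  have hadj : ∀ x y, G.Adj x y → f x ≠ 0 → y ∈ t := by
    intro x y hxy hx
    exact Finset.mem_union_right _ (Finset.mem_biUnion.2
      ⟨x, hf.mem_toFinset.2 hx, (SimpleGraph.mem_neighborFinset G x y).2 hxy⟩)
  have hout : ∀ x, x ∉ t → f x = 0 := fun x hx => by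
    by_contra h; exact hx (hfs x h)
  -- the pair summand
  set P : V → V → ℝ := fun x y =>
    if G.Adj x y then a x y * v x * v y * (f x - f y) else 0 with hP
  have hPanti : ∀ x y, P x y = - P y x := by
    intro x y
    simp only [hP]
    by_cases h : G.Adj x y
    · rw [if_pos h, if_pos h.symm, has x y]; ring
    · rw [if_neg h, if_neg (fun h' => h h'.symm)]; ring
  -- inner sum conversions
  have inner1 : ∀ x, (f x * v x) * (schrod G a W (fun y => f y * v y) x - lam * (f x * v x))
      = ∑ y ∈ t, P x y * f x := by
    intro x
    rw [key x]
    have h2 : ∑ y ∈ t, P x y * f x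
        = ∑ y ∈ t.filter (fun y => G.Adj x y), a x y * v x * v y * f x * (f x - f y) := by
      rw [Finset.sum_filter]
      refine Finset.sum_congr rfl fun y _ => ?_
      simp only [hP]
      by_cases h : G.Adj x y
      · rw [if_pos h, if_pos h]; ring
      · rw [if_neg h, if_neg h]; ring
    rw [h2]
    refine (Finset.sum_subset ?_ ?_).symm
    · intro y hy
      exact (SimpleGraph.mem_neighborFinset G x y).2 (Finset.mem_filter.1 hy).2
    · intro y hy hy'
      have hyadj : G.Adj x y := (SimpleGraph.mem_neighborFinset G x y).1 hy
      have hyt : y ∉ t := fun h => hy' (Finset.mem_filter.2 ⟨h, hyadj⟩)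
      have hfx : f x = 0 := by
        by_contra h; exact hyt (hadj x y hyadj h)
      rw [hfx]; ring
  have inner2 : ∀ x ∈ t, v x * ∑ y ∈ G.neighborFinset x, a x y * v y * (f x - f y) ^ 2
      = ∑ y ∈ t, P x y * (f x - f y) := by
    intro x _
    rw [Finset.mul_sum]
    have h2 : ∑ y ∈ t, P x y * (f x - f y)
        = ∑ y ∈ t.filter (fun y => G.Adj x y), v x * (a x y * v y * (f x - f y) ^ 2) := by
      rw [Finset.sum_filter]
      refine Finset.sum_congr rfl fun y _ => ?_
      simp only [hP]
      by_cases h : G.Adj x y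
      · rw [if_pos h, if_pos h]; ring
      · rw [if_neg h, if_neg h]; ring
    rw [h2]
    refine (Finset.sum_subset ?_ ?_).symm
    · intro y hy
      exact (SimpleGraph.mem_neighborFinset G x y).2 (Finset.mem_filter.1 hy).2
    · intro y hy hy'
      have hyadj : G.Adj x y := (SimpleGraph.mem_neighborFinset G x y).1 hy
      have hyt : y ∉ t := fun h => hy' (Finset.mem_filter.2 ⟨h, hyadj⟩)
      have hfx : f x = 0 := by
        by_contra h; exact hyt (hadj x y hyadj h)
      have hfy : f y = 0 := hout y hyt
      rw [hfx, hfy]; ring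
  -- A and B
  have hB : ∑ x ∈ t, ∑ y ∈ t, P x y * f y = - ∑ x ∈ t, ∑ y ∈ t, P x y * f x := by
    calc ∑ x ∈ t, ∑ y ∈ t, P x y * f y = ∑ y ∈ t, ∑ x ∈ t, P x y * f y := Finset.sum_comm
      _ = ∑ y ∈ t, ∑ x ∈ t, -(P y x * f y) := by
          refine Finset.sum_congr rfl fun y _ => Finset.sum_congr rfl fun x _ => ?_
          rw [hPanti x y]; ring
      _ = - ∑ y ∈ t, ∑ x ∈ t, P y x * f y := by
          simp [Finset.sum_neg_distrib]
  -- first finsum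
  have hsum1 : (∑ᶠ x, (f x * v x) * (schrod G a W (fun y => f y * v y) x - lam * (f x * v x)))
      = ∑ x ∈ t, ∑ y ∈ t, P x y * f x := by
    rw [finsum_eq_finset_sum_of_support_subset _ (s := t) ?_]
    · exact Finset.sum_congr rfl fun x _ => inner1 x
    · intro x hx
      simp only [Function.mem_support, ne_eq] at hx
      by_contra hxt
      apply hx
      rw [inner1 x]
      exact Finset.sum_eq_zero fun y _ => by rw [hout x hxt]; ring
  -- second finsum
  have hsum2 : (∑ᶠ x, v x * ∑ y ∈ G.neighborFinset x, a x y * v y * (f x - f y) ^ 2)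
      = ∑ x ∈ t, ∑ y ∈ t, P x y * (f x - f y) := by
    rw [finsum_eq_finset_sum_of_support_subset _ (s := t) ?_]
    · exact Finset.sum_congr rfl fun x hx => inner2 x hx
    · intro x hx
      simp only [Function.mem_support, ne_eq] at hx
      by_contra hxt
      apply hx
      have hfx : f x = 0 := hout x hxt
      rw [mul_comm, Finset.sum_mul]
      refine Finset.sum_eq_zero fun y hy => ?_
      have hyadj : G.Adj x y := (SimpleGraph.mem_neighborFinset G x y).1 hy
      have hfy : f y = 0 := by
        by_contra h
        exact hxt (hadj y x hyadj.symm h)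
      rw [hfx, hfy]; ring
  have hAB : ∑ x ∈ t, ∑ y ∈ t, P x y * (f x - f y)
      = 2 * ∑ x ∈ t, ∑ y ∈ t, P x y * f x := by
    have : ∀ x ∈ t, ∑ y ∈ t, P x y * (f x - f y)
        = (∑ y ∈ t, P x y * f x) - ∑ y ∈ t, P x y * f y := by
      intro x _
      rw [← Finset.sum_sub_distrib]
      exact Finset.sum_congr rfl fun y _ => by ring
    rw [Finset.sum_congr rfl this, Finset.sum_sub_distrib, hB]
    ring
  constructor
  · -- edge identity
    set F : Sym2 V → ℝ := Sym2.lift ⟨fun x y => a x y * (v x * v y) * (f x - f y) ^ 2,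
        fun x y => by dsimp only; rw [has x y]; ring⟩ with hF
    set D : Finset (V × V) := (t ×ˢ t).filter (fun p => G.Adj p.1 p.2) with hD
    have hDmem : ∀ p : V × V, p ∈ D ↔ (p.1 ∈ t ∧ p.2 ∈ t ∧ G.Adj p.1 p.2) := by
      intro p
      simp only [hD, Finset.mem_filter, Finset.mem_product]
      tauto
    set E : Finset (Sym2 V) := D.image (fun p => s(p.1, p.2)) with hE
    -- finsum over edge set reduces to sum over E
    have step1 : (∑ᶠ e ∈ G.edgeSet, F e) = ∑ e ∈ E, F e := by
      apply finsum_mem_eq_sum_of_inter_support_eq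
      ext e
      induction e using Sym2.ind with
      | _ x y =>
        simp only [hE, Set.mem_inter_iff, Set.mem_setOf_eq, Function.mem_support,
          SimpleGraph.mem_edgeSet, Finset.mem_coe, Finset.mem_image]
        constructor
        · rintro ⟨hxy, hne⟩
          have hFe : F s(x, y) = a x y * (v x * v y) * (f x - f y) ^ 2 := by
            simp [hF]
          have hfne : f x ≠ f y := by
            intro h
            apply hne
            rw [hFe, h]; ring
          have hxt : x ∈ t ∧ y ∈ t := by
            by_cases hfx : f x = 0
            · have hfy : f y ≠ 0 := by rw [hfx] at hfne; exact fun h => hfne h.symm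
              exact ⟨hadj y x hxy.symm hfy, hfs y hfy⟩
            · exact ⟨hfs x hfx, hadj x y hxy hfx⟩
          exact ⟨⟨(x, y), (hDmem (x, y)).2 ⟨hxt.1, hxt.2, hxy⟩, rfl⟩, hne⟩
        · rintro ⟨⟨p, hp, hpe⟩, hne⟩
          refine ⟨?_, hne⟩
          have hpadj : G.Adj p.1 p.2 := ((hDmem p).1 hp).2.2
          have : s(p.1, p.2) ∈ G.edgeSet := hpadj
          rwa [hpe] at this
    -- sum over E is half the sum over D
    have step2 : ∑ e ∈ E, F e = (1 / 2) * ∑ p ∈ D, F s(p.1, p.2) := by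
      rw [hE, Finset.sum_image' (fun p => (1 / 2 : ℝ) * F s(p.1, p.2))]
      · rw [Finset.mul_sum]
      · intro p hp
        obtain ⟨x, y⟩ := p
        have hxy : G.Adj x y := ((hDmem (x, y)).1 hp).2.2
        have hmem := (hDmem (x, y)).1 hp
        have hfiber : D.filter (fun q => s(q.1, q.2) = s(x, y)) = {(x, y), (y, x)} := by
          ext q
          obtain ⟨qx, qy⟩ := q
          simp only [Finset.mem_filter, Finset.mem_insert, Finset.mem_singleton,
            Prod.mk.injEq, Sym2.eq_iff]
          constructor
          · rintro ⟨_, h | h⟩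
            · exact Or.inl h
            · exact Or.inr ⟨h.1, h.2⟩
          · rintro (⟨h1, h2⟩ | ⟨h1, h2⟩)
            · subst h1; subst h2
              exact ⟨hp, Or.inl ⟨rfl, rfl⟩⟩
            · subst h1; subst h2
              exact ⟨(hDmem (qx, qy)).2 ⟨hmem.2.1, hmem.1, hxy.symm⟩, Or.inr ⟨rfl, rfl⟩⟩
        rw [hfiber]
        have hne : ((x, y) : V × V) ≠ (y, x) := by
          intro h
          exact hxy.ne (congrArg Prod.fst h)
        rw [Finset.sum_pair hne]
        have hswap : F s(y, x) = F s(x, y) := by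
          rw [Sym2.eq_swap]
        rw [hswap]; ring
    -- sum over D equals the double sum
    have step3 : ∑ p ∈ D, F s(p.1, p.2) = ∑ x ∈ t, ∑ y ∈ t, P x y * (f x - f y) := by
      rw [hD, Finset.sum_filter, Finset.sum_product]
      refine Finset.sum_congr rfl fun x _ => Finset.sum_congr rfl fun y _ => ?_
      simp only [hP, hF, Sym2.lift_mk]
      by_cases h : G.Adj x y
      · rw [if_pos h, if_pos h]; ring
      · rw [if_neg h, if_neg h]; ring
    rw [hsum1, step1, step2, step3, hAB]
    ring
  · rw [hsum1, hsum2, hAB]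
    ring
end

section
/- Gaffney-type theorem for graphs: Let G be an infinite connected graph with vertex degrees uniformly bounded by N, and H = Δ_{1,a} + W a Schrödinger operator on G. Suppose the weighted path metric δ_a, where the length of an edge {x,y} is 1/√(a_{xy}), is complete, and suppose there is k ∈ ℝ with ⟨Hg,g⟩ ≥ k‖g‖² for all finitely supported g. Then H with domain C₀(V) is essentially self-adjoint; equivalently, for every λ < k − 1, the only ℓ²(V) solution of Hv = λv is v ≡ 0. -/
open Finset

variable {V : Type*}

/-- Length of a walk, where an edge `{x,y}` has length `1/√(a_{xy})`. -/
noncomputable def wlen (G : SimpleGraph V) (a : V → V → ℝ) {x y : V} (p : G.Walk x y) : ℝ :=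
  (p.darts.map fun d => 1 / Real.sqrt (a d.toProd.1 d.toProd.2)).sum

/-- The weighted path metric `δ_a` on the graph. -/
noncomputable def pdist (G : SimpleGraph V) (a : V → V → ℝ) (x y : V) : ℝ :=
  sInf {L | ∃ p : G.Walk x y, wlen G a p = L}

/-- Metric completeness of `(V, δ_a)`: every Cauchy sequence converges. -/
def metComplete (G : SimpleGraph V) (a : V → V → ℝ) : Prop :=
  ∀ u : ℕ → V,
    (∀ ε : ℝ, 0 < ε → ∃ N : ℕ, ∀ m ≥ N, ∀ n ≥ N, pdist G a (u m) (u n) < ε) →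
      ∃ x : V, ∀ ε : ℝ, 0 < ε → ∃ N : ℕ, ∀ n ≥ N, pdist G a (u n) x < ε

/-!
Completeness of `δ_a` makes every `δ_a`-ball finite: by König's lemma an infinite ball of a
locally finite graph contains an infinite walk of finite length, which is `δ_a`-Cauchy but cannot
converge, since every vertex is isolated for `δ_a`. Hence the cutoff
`η_R = max (1 - δ_a(z, ·) / R) 0` is finitely supported. For an `ℓ²` solution of `Hv = λv`,
testing the lower bound `k` on `η_R v` leaves only the commutator term:
`(k - λ) ‖η_R v‖² ≤ ½ Σ_{x∼y} a_{xy} (η_R x - η_R y)² v_x v_y ≤ N ‖v‖² / (2 R²)`,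
because `η_R` is `1/R`-Lipschitz for `δ_a` and an edge has `δ_a`-length at most `1/√a_{xy}`.
Letting `R → ∞` gives `v z = 0`.
-/

open SimpleGraph

noncomputable def edgeLen (a : V → V → ℝ) (x y : V) : ℝ := 1 / √(a x y)

section WalkLength

variable {G : SimpleGraph V} {a : V → V → ℝ}

lemma edgeLen_nonneg (x y : V) : 0 ≤ edgeLen a x y := by
  unfold edgeLen; positivity

lemma mul_edgeLen_sq {x y : V} (h : 0 < a x y) : a x y * edgeLen a x y ^ 2 = 1 := by
  rw [edgeLen, div_pow, Real.sq_sqrt h.le]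
  field_simp

@[simp] lemma wlen_nil {x : V} : wlen G a (Walk.nil : G.Walk x x) = 0 := rfl

@[simp] lemma wlen_cons {x y z : V} (h : G.Adj x y) (p : G.Walk y z) :
    wlen G a (Walk.cons h p) = edgeLen a x y + wlen G a p := by
  simp [wlen, edgeLen, Walk.darts_cons]

lemma wlen_append {x y z : V} (p : G.Walk x y) (q : G.Walk y z) :
    wlen G a (p.append q) = wlen G a p + wlen G a q := by
  simp [wlen, Walk.darts_append]

lemma wlen_reverse (has : ∀ x y, a x y = a y x) {x y : V} (p : G.Walk x y) :
    wlen G a p.reverse = wlen G a p := by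
  simp only [wlen, Walk.darts_reverse, List.map_reverse, List.sum_reverse, List.map_map]
  refine congrArg List.sum (List.map_congr_left fun d _ => ?_)
  simp [Dart.symm, has d.toProd.1 d.toProd.2]

lemma wlen_nonneg {x y : V} (p : G.Walk x y) : 0 ≤ wlen G a p := by
  induction p with
  | nil => simp
  | cons h p ih => rw [wlen_cons]; exact add_nonneg (edgeLen_nonneg _ _) ih

end WalkLength

section PathMetric

variable {G : SimpleGraph V} {a : V → V → ℝ}

lemma pdist_le_wlen {x y : V} (p : G.Walk x y) : pdist G a x y ≤ wlen G a p :=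
  csInf_le ⟨0, by rintro _ ⟨q, rfl⟩; exact wlen_nonneg q⟩ ⟨p, rfl⟩

lemma le_pdist (hG : G.Preconnected) {x y : V} {c : ℝ} (h : ∀ p : G.Walk x y, c ≤ wlen G a p) :
    c ≤ pdist G a x y := by
  obtain ⟨p⟩ := hG x y
  exact le_csInf ⟨_, p, rfl⟩ (by rintro _ ⟨q, rfl⟩; exact h q)

lemma exists_wlen_lt_of_pdist_lt (hG : G.Preconnected) {x y : V} {r : ℝ}
    (h : pdist G a x y < r) : ∃ p : G.Walk x y, wlen G a p < r := by
  by_contra! h'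
  exact h.not_ge (le_pdist hG h')

lemma pdist_self (hG : G.Preconnected) (x : V) : pdist G a x x = 0 :=
  le_antisymm (pdist_le_wlen Walk.nil) (le_pdist hG wlen_nonneg)

lemma pdist_comm (hG : G.Preconnected) (has : ∀ x y, a x y = a y x) (x y : V) :
    pdist G a x y = pdist G a y x := by
  have swap : ∀ x y, pdist G a x y ≤ pdist G a y x := fun x y =>
    le_pdist hG fun p => wlen_reverse has p ▸ pdist_le_wlen p.reverse
  exact le_antisymm (swap x y) (swap y x)

lemma pdist_triangle (hG : G.Preconnected) (x y z : V) :
    pdist G a x z ≤ pdist G a x y + pdist G a y z := by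
  have h₁ : ∀ q : G.Walk y z, pdist G a x z - wlen G a q ≤ pdist G a x y := fun q =>
    le_pdist hG fun p => by
      linarith [wlen_append (a := a) p q, pdist_le_wlen (a := a) (p.append q)]
  have h₂ : pdist G a x z - pdist G a x y ≤ pdist G a y z :=
    le_pdist hG fun q => by linarith [h₁ q]
  linarith

lemma pdist_le_edgeLen {x y : V} (h : G.Adj x y) : pdist G a x y ≤ edgeLen a x y := by
  simpa using pdist_le_wlen (a := a) (Walk.cons h Walk.nil)

lemma abs_pdist_sub_pdist_le_edgeLen (hG : G.Preconnected) (has : ∀ x y, a x y = a y x)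
    (z : V) {x y : V} (h : G.Adj x y) :
    |pdist G a z x - pdist G a z y| ≤ edgeLen a x y := by
  have hxy := pdist_le_edgeLen (a := a) h
  rw [abs_sub_le_iff]
  constructor
  · linarith [pdist_triangle (a := a) hG z y x, pdist_comm hG has y x]
  · linarith [pdist_triangle (a := a) hG z x y]

lemma pdist_le_sum_Ico (hG : G.Preconnected) {u : ℕ → V} (hu : ∀ i, G.Adj (u i) (u (i + 1)))
    {m n : ℕ} (hmn : m ≤ n) :
    pdist G a (u m) (u n) ≤ ∑ i ∈ Ico m n, edgeLen a (u i) (u (i + 1)) := by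
  induction n, hmn using Nat.le_induction with
  | base => simp [pdist_self hG]
  | succ n hmn ih =>
    rw [sum_Ico_succ_top hmn]
    linarith [pdist_triangle (a := a) hG (u m) (u n) (u (n + 1)),
      pdist_le_edgeLen (a := a) (hu n)]

lemma pdist_cauchy_of_sum_edgeLen_le (hG : G.Preconnected) (has : ∀ x y, a x y = a y x)
    {u : ℕ → V} (hu : ∀ i, G.Adj (u i) (u (i + 1))) {B : ℝ}
    (hB : ∀ n, ∑ i ∈ range n, edgeLen a (u i) (u (i + 1)) ≤ B) :
    ∀ ε : ℝ, 0 < ε → ∃ N : ℕ, ∀ m ≥ N, ∀ n ≥ N, pdist G a (u m) (u n) < ε := by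
  set s : ℕ → ℝ := fun n => ∑ i ∈ range n, edgeLen a (u i) (u (i + 1))
  have hmono : Monotone s := fun m n h =>
    sum_le_sum_of_subset_of_nonneg (range_mono h) fun _ _ _ => edgeLen_nonneg _ _
  have hs : CauchySeq s :=
    (tendsto_atTop_ciSup hmono ⟨B, by rintro _ ⟨n, rfl⟩; exact hB n⟩).cauchySeq
  intro ε hε
  obtain ⟨N, hN⟩ := Metric.cauchySeq_iff.1 hs ε hε
  refine ⟨N, fun m hm n hn => ?_⟩
  wlog hmn : m ≤ n generalizing m n
  · rw [pdist_comm hG has]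
    exact this n hn m hm (le_of_not_ge hmn)
  calc pdist G a (u m) (u n) ≤ ∑ i ∈ Ico m n, edgeLen a (u i) (u (i + 1)) :=
        pdist_le_sum_Ico hG hu hmn
    _ = s n - s m := sum_Ico_eq_sub _ hmn
    _ ≤ dist (s n) (s m) := le_abs_self _
    _ < ε := hN n hn m hm

variable [∀ x, Fintype (G.neighborSet x)]

lemma exists_pos_forall_ne_le_pdist (hG : G.Preconnected) (ha : ∀ x y, G.Adj x y → 0 < a x y)
    (x : V) : ∃ c > 0, ∀ w ≠ x, c ≤ pdist G a x w := by
  set c := (insert 1 ((G.neighborFinset x).image (edgeLen a x))).min' (insert_nonempty _ _)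
  have hc : ∀ y, G.Adj x y → c ≤ edgeLen a x y := fun y h =>
    min'_le _ _ (mem_insert_of_mem (mem_image_of_mem _ ((mem_neighborFinset G x y).2 h)))
  refine ⟨c, ?_, fun w hw => le_pdist hG fun p => ?_⟩
  · refine (lt_min'_iff _ _).2 fun b hb => ?_
    obtain rfl | hb := mem_insert.1 hb
    · exact one_pos
    obtain ⟨y, hy, rfl⟩ := mem_image.1 hb
    exact one_div_pos.2 (Real.sqrt_pos.2 (ha x y ((mem_neighborFinset G x y).1 hy)))
  · cases p with
    | nil => exact absurd rfl hw
    | cons h q => rw [wlen_cons]; linarith [hc _ h, wlen_nonneg (a := a) q]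

end PathMetric

section FiniteBalls

variable {G : SimpleGraph V} {a : V → V → ℝ}

variable (G a) in
def walkBall (u : V) (r : ℝ) : Set V := {x | ∃ p : G.Walk u x, wlen G a p < r}

lemma walkBall_subset (u : V) (r : ℝ) :
    walkBall G a u r ⊆ insert u (⋃ y ∈ G.neighborSet u, walkBall G a y (r - edgeLen a u y)) := by
  rintro x ⟨p, hp⟩
  cases p with
  | nil => exact Set.mem_insert _ _
  | cons h q =>
    rw [wlen_cons] at hp
    exact Set.mem_insert_of_mem _ (Set.mem_biUnion h ⟨q, by linarith⟩)

variable [∀ x, Fintype (G.neighborSet x)]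

lemma exists_adj_walkBall_infinite {u : V} {r : ℝ} (h : (walkBall G a u r).Infinite) :
    ∃ y, G.Adj u y ∧ (walkBall G a y (r - edgeLen a u y)).Infinite := by
  by_contra! hfin
  exact h ((((G.neighborSet u).toFinite.biUnion hfin).insert u).subset (walkBall_subset u r))

lemma exists_adj_seq_of_walkBall_infinite {x₀ : V} {r : ℝ} (h : (walkBall G a x₀ r).Infinite) :
    ∃ u : ℕ → V, (∀ i, G.Adj (u i) (u (i + 1))) ∧
      ∀ n, ∑ i ∈ range n, edgeLen a (u i) (u (i + 1)) < r := by
  have : Nonempty V := ⟨x₀⟩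
  choose! nxt hadj hinf using fun (q : V × ℝ) (hq : (walkBall G a q.1 q.2).Infinite) =>
    exists_adj_walkBall_infinite hq
  -- the second coordinate is the length budget left for the rest of the walk
  set step : V × ℝ → V × ℝ := fun q => (nxt q, q.2 - edgeLen a q.1 (nxt q))
  set s : ℕ → V × ℝ := fun n => step^[n] (x₀, r)
  have hs_succ : ∀ n, s (n + 1) = step (s n) := fun n => Function.iterate_succ_apply' _ _ _
  have hs_inf : ∀ n, (walkBall G a (s n).1 (s n).2).Infinite := by
    intro n
    induction n with
    | zero => exact h
    | succ n ih => rw [hs_succ]; exact hinf _ ih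
  have hs_budget : ∀ n, (s n).2 = r - ∑ i ∈ range n, edgeLen a (s i).1 (s (i + 1)).1 := by
    intro n
    induction n with
    | zero => simp [s]
    | succ n ih =>
      rw [sum_range_succ, hs_succ n]
      simp only [step]
      linarith
  refine ⟨fun n => (s n).1, fun i => ?_, fun n => ?_⟩
  · show G.Adj (s i).1 (s (i + 1)).1
    rw [hs_succ]
    exact hadj _ (hs_inf i)
  · obtain ⟨x, p, hp⟩ := (hs_inf n).nonempty
    linarith [wlen_nonneg (a := a) p, hs_budget n]

theorem finite_setOf_pdist_le (hG : G.Preconnected) (ha : ∀ x y, G.Adj x y → 0 < a x y)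
    (has : ∀ x y, a x y = a y x) (hcomp : metComplete G a) (x₀ : V) (R : ℝ) :
    {x | pdist G a x₀ x ≤ R}.Finite := by
  have hsub : {x | pdist G a x₀ x ≤ R} ⊆ walkBall G a x₀ (R + 1) := fun x hx =>
    exists_wlen_lt_of_pdist_lt hG (lt_of_le_of_lt hx (lt_add_one R))
  refine Set.Finite.subset (Set.not_infinite.1 fun hinf => ?_) hsub
  obtain ⟨u, hu, hsum⟩ := exists_adj_seq_of_walkBall_infinite hinf
  obtain ⟨x, hx⟩ := hcomp u (pdist_cauchy_of_sum_edgeLen_le hG has hu fun n => (hsum n).le)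
  obtain ⟨c, hc, hcx⟩ := exists_pos_forall_ne_le_pdist hG ha x
  obtain ⟨N, hN⟩ := hx c hc
  have hux : ∀ n ≥ N, u n = x := fun n hn => by
    by_contra hne
    exact (hN n hn).not_ge (pdist_comm hG has x _ ▸ hcx _ hne)
  exact (hu N).ne ((hux N le_rfl).trans (hux (N + 1) N.le_succ).symm)

end FiniteBalls

section Localization

variable {G : SimpleGraph V} {a : V → V → ℝ}

lemma sum_sum_ite_adj_comm [DecidableRel G.Adj] {M : Type*} [AddCommMonoid M] (T : Finset V)
    (f : V → V → M) :
    ∑ x ∈ T, ∑ y ∈ T, (if G.Adj x y then f x y else 0) =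
      ∑ x ∈ T, ∑ y ∈ T, (if G.Adj x y then f y x else 0) := by
  rw [sum_comm]
  exact sum_congr rfl fun x _ => sum_congr rfl fun y _ => if_congr (G.adj_comm y x) rfl rfl

variable [∀ x, Fintype (G.neighborSet x)]

lemma sum_sum_ite_adj_le [DecidableRel G.Adj] {N : ℕ} (hdeg : ∀ x, (G.neighborFinset x).card ≤ N)
    (T : Finset V) {f : V → ℝ} (hf : ∀ x, 0 ≤ f x) :
    ∑ x ∈ T, ∑ y ∈ T, (if G.Adj x y then f x else 0) ≤ N * ∑ x ∈ T, f x := by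
  rw [mul_sum]
  refine sum_le_sum fun x _ => ?_
  rw [← sum_filter, sum_const, nsmul_eq_mul]
  have hcard : (T.filter (G.Adj x)).card ≤ N :=
    (card_le_card fun y hy => (mem_neighborFinset G x y).2 (mem_filter.1 hy).2).trans (hdeg x)
  exact mul_le_mul_of_nonneg_right (by exact_mod_cast hcard) (hf x)

lemma sum_sum_ite_adj_mul_le [DecidableRel G.Adj] {N : ℕ}
    (hdeg : ∀ x, (G.neighborFinset x).card ≤ N) (T : Finset V) {b : V → V → ℝ} {C : ℝ}
    (hC : 0 ≤ C) (hb : ∀ x y, G.Adj x y → 0 ≤ b x y ∧ b x y ≤ C) (v : V → ℝ) :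
    ∑ x ∈ T, ∑ y ∈ T, (if G.Adj x y then b x y * (v x * v y) else 0) ≤
      C * N * ∑ x ∈ T, v x ^ 2 := by
  have hterm : ∀ x y, (if G.Adj x y then b x y * (v x * v y) else 0) ≤
      C / 2 * ((if G.Adj x y then v x ^ 2 else 0) + (if G.Adj x y then v y ^ 2 else 0)) := by
    intro x y
    split_ifs with h
    · obtain ⟨hb0, hbC⟩ := hb x y h
      nlinarith [mul_nonneg hb0 (sq_nonneg (v x - v y)),
        mul_le_mul_of_nonneg_right hbC (add_nonneg (sq_nonneg (v x)) (sq_nonneg (v y)))]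
    · simp
  have hswap := sum_sum_ite_adj_comm (G := G) T fun x _ => v x ^ 2
  calc _ ≤ ∑ x ∈ T, ∑ y ∈ T, C / 2 *
          ((if G.Adj x y then v x ^ 2 else 0) + (if G.Adj x y then v y ^ 2 else 0)) :=
        sum_le_sum fun x _ => sum_le_sum fun y _ => hterm x y
    _ = C * ∑ x ∈ T, ∑ y ∈ T, (if G.Adj x y then v x ^ 2 else 0) := by
        simp only [← mul_sum, sum_add_distrib, ← hswap]
        ring
    _ ≤ C * (N * ∑ x ∈ T, v x ^ 2) := by
        gcongr
        exact sum_sum_ite_adj_le hdeg T fun x => sq_nonneg (v x)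
    _ = C * N * ∑ x ∈ T, v x ^ 2 := by ring

lemma schrod_mul_mul_eq (W η v : V → ℝ) (x : V) :
    schrod G a W (fun x => η x * v x) x * (η x * v x) =
      η x ^ 2 * v x * schrod G a W v x +
        ∑ y ∈ G.neighborFinset x, a x y * (η x - η y) * (η x * v x * v y) := by
  have hterm : ∀ y, a x y * (η x * v x - η y * v y) * (η x * v x) =
      η x ^ 2 * v x * (a x y * (v x - v y)) + a x y * (η x - η y) * (η x * v x * v y) :=
    fun y => by ring
  simp only [schrod, add_mul, sum_mul, hterm, sum_add_distrib, mul_add, mul_sum]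
  ring

lemma sum_neighborFinset_eq_sum_sum_ite_adj [DecidableRel G.Adj] {S T : Finset V}
    (hST : S ⊆ T) (hNT : ∀ x ∈ S, G.neighborFinset x ⊆ T) {F : V → V → ℝ}
    (hF : ∀ x ∉ S, ∀ y, F x y = 0) :
    ∑ x ∈ S, ∑ y ∈ G.neighborFinset x, F x y =
      ∑ x ∈ T, ∑ y ∈ T, (if G.Adj x y then F x y else 0) := by
  refine (sum_congr rfl fun x hx => ?_).trans
    (sum_subset hST fun x _ hx => sum_eq_zero fun y _ => by simp [hF x hx])
  rw [← sum_filter]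
  congr 1
  ext y
  simpa using fun h => hNT x hx ((mem_neighborFinset G x y).2 h)

lemma two_mul_sum_localization_eq [DecidableRel G.Adj] (has : ∀ x y, a x y = a y x)
    {S T : Finset V} (hST : S ⊆ T) (hNT : ∀ x ∈ S, G.neighborFinset x ⊆ T) {η : V → ℝ}
    (hη : ∀ x ∉ S, η x = 0) (v : V → ℝ) :
    2 * ∑ x ∈ S, ∑ y ∈ G.neighborFinset x, a x y * (η x - η y) * (η x * v x * v y) =
      ∑ x ∈ T, ∑ y ∈ T, (if G.Adj x y then a x y * (η x - η y) ^ 2 * (v x * v y) else 0) := by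
  rw [sum_neighborFinset_eq_sum_sum_ite_adj hST hNT fun x hx y => by simp [hη x hx], two_mul]
  nth_rewrite 2 [sum_sum_ite_adj_comm]
  simp only [← sum_add_distrib]
  refine sum_congr rfl fun x _ => sum_congr rfl fun y _ => ?_
  split_ifs
  · rw [has y x]; ring
  · simp

theorem sub_mul_sum_sq_le_of_eigenvector (ha : ∀ x y, G.Adj x y → 0 < a x y)
    (has : ∀ x y, a x y = a y x) {N : ℕ} (hdeg : ∀ x, (G.neighborFinset x).card ≤ N)
    {W : V → ℝ} {k : ℝ} (hk : ∀ g : V → ℝ, (Function.support g).Finite →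
      k * ∑ᶠ x, (g x) ^ 2 ≤ ∑ᶠ x, schrod G a W g x * g x)
    {lam : ℝ} {v : V → ℝ} (hv : Summable fun x => v x ^ 2)
    (heq : ∀ x, schrod G a W v x = lam * v x) {S : Finset V} {η : V → ℝ}
    (hη : ∀ x ∉ S, η x = 0) {C : ℝ} (hC : 0 ≤ C)
    (hηC : ∀ x y, G.Adj x y → a x y * (η x - η y) ^ 2 ≤ C) :
    (k - lam) * ∑ x ∈ S, (η x * v x) ^ 2 ≤ C * N / 2 * ∑' x, v x ^ 2 := by
  classical
  set g : V → ℝ := fun x => η x * v x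
  have hg : Function.support g ⊆ S :=
    Function.support_subset_iff'.2 fun x hx => by simp [g, hη x hx]
  have hform := hk g (S.finite_toSet.subset hg)
  rw [finsum_eq_sum_of_support_subset _ ((Function.support_pow _ two_ne_zero).trans_subset hg),
    finsum_eq_sum_of_support_subset _ ((Function.support_mul_subset_right _ _).trans hg)] at hform
  set T := S ∪ S.biUnion fun x => G.neighborFinset x
  have hlocal := two_mul_sum_localization_eq has (T := T) subset_union_left
    (fun x hx => (subset_biUnion_of_mem (fun x => G.neighborFinset x) hx).trans
      subset_union_right) hη v
  have hbound := sum_sum_ite_adj_mul_le hdeg T hC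
    (fun x y h => ⟨mul_nonneg (ha x y h).le (sq_nonneg _), hηC x y h⟩) v
  have htsum := hv.sum_le_tsum T fun x _ => sq_nonneg (v x)
  have hpoint : ∑ x ∈ S, schrod G a W g x * g x = lam * ∑ x ∈ S, g x ^ 2 +
      ∑ x ∈ S, ∑ y ∈ G.neighborFinset x, a x y * (η x - η y) * (η x * v x * v y) := by
    simp only [g, schrod_mul_mul_eq, heq, mul_sum, ← sum_add_distrib]
    exact sum_congr rfl fun x _ => by ring
  nlinarith [mul_le_mul_of_nonneg_left htsum (mul_nonneg hC (Nat.cast_nonneg N))]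

end Localization

section Cutoff

variable {G : SimpleGraph V} {a : V → V → ℝ}

variable (G a) in
noncomputable def cutoff (z : V) (R : ℝ) (x : V) : ℝ := max (1 - pdist G a z x / R) 0

lemma cutoff_self (hG : G.Preconnected) (z : V) (R : ℝ) : cutoff G a z R z = 1 := by
  simp [cutoff, pdist_self hG]

lemma cutoff_eq_zero {z x : V} {R : ℝ} (hR : 0 < R) (hx : R ≤ pdist G a z x) :
    cutoff G a z R x = 0 :=
  max_eq_right (by rw [sub_nonpos, one_le_div hR]; exact hx)

lemma mul_cutoff_sub_sq_le (hG : G.Preconnected) (ha : ∀ x y, G.Adj x y → 0 < a x y)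
    (has : ∀ x y, a x y = a y x) (z : V) {R : ℝ} (hR : 0 < R) {x y : V} (h : G.Adj x y) :
    a x y * (cutoff G a z R x - cutoff G a z R y) ^ 2 ≤ 1 / R ^ 2 := by
  have hlip : |cutoff G a z R x - cutoff G a z R y| ≤ edgeLen a x y / R :=
    calc _ ≤ |(1 - pdist G a z x / R) - (1 - pdist G a z y / R)| := abs_max_sub_max_le_abs _ _ _
      _ = |pdist G a z x - pdist G a z y| / R := by
        rw [show 1 - pdist G a z x / R - (1 - pdist G a z y / R) =
          (pdist G a z y - pdist G a z x) / R by ring, abs_div, abs_of_pos hR, abs_sub_comm]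
      _ ≤ edgeLen a x y / R := by gcongr; exact abs_pdist_sub_pdist_le_edgeLen hG has z h
  have hsq : (cutoff G a z R x - cutoff G a z R y) ^ 2 ≤ (edgeLen a x y / R) ^ 2 := by
    rw [← sq_abs]
    gcongr
  calc _ ≤ a x y * (edgeLen a x y / R) ^ 2 := mul_le_mul_of_nonneg_left hsq (ha x y h).le
    _ = 1 / R ^ 2 := by rw [div_pow, ← mul_div_assoc, mul_edgeLen_sq (ha x y h)]

end Cutoff

lemma nonpos_of_forall_le_div_sq {c C : ℝ} (h : ∀ R > 0, c ≤ C / R ^ 2) : c ≤ 0 :=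
  ge_of_tendsto (tendsto_const_nhds.div_atTop (Filter.tendsto_pow_atTop two_ne_zero))
    ((Filter.eventually_gt_atTop (0 : ℝ)).mono h)

/-- Gaffney-type theorem: bounded valence, complete `δ_a`, quadratic form
bounded below by `k` ⟹ `H = Δ_{1,a} + W` is essentially self-adjoint: for every
`λ < k − 1` the only `ℓ²` solution of `Hv = λv` is `v ≡ 0`. -/
theorem stmt12 (G : SimpleGraph V) [∀ x : V, Fintype (G.neighborSet x)]
    (hG : G.Connected) [Infinite V]
    (N : ℕ) (hdeg : ∀ x, (G.neighborFinset x).card ≤ N)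
    (a : V → V → ℝ) (ha : ∀ x y, G.Adj x y → 0 < a x y)
    (has : ∀ x y, a x y = a y x) (W : V → ℝ)
    (hcomp : metComplete G a)
    (k : ℝ)
    (hk : ∀ g : V → ℝ, (Function.support g).Finite →
      k * ∑ᶠ x, (g x) ^ 2 ≤ ∑ᶠ x, schrod G a W g x * g x) :
    ∀ lam : ℝ, lam < k - 1 → ∀ v : V → ℝ, Summable (fun x => (v x) ^ 2) →
      (∀ x, schrod G a W v x = lam * v x) → v = 0 := by
  intro lam hlam v hv heq
  funext z
  have hk_lam : 0 < k - lam := by linarith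
  have hdecay : ∀ R > 0, (k - lam) * v z ^ 2 ≤ (N / 2 * ∑' x, v x ^ 2) / R ^ 2 := fun R hR => by
    set S := (finite_setOf_pdist_le hG.preconnected ha has hcomp z R).toFinset
    have hS : ∀ x ∉ S, cutoff G a z R x = 0 := fun x hx =>
      cutoff_eq_zero hR (not_le.1 (by simpa [S] using hx)).le
    have hz : z ∈ S := by simp [S, pdist_self hG.preconnected]; positivity
    calc (k - lam) * v z ^ 2 = (k - lam) * (cutoff G a z R z * v z) ^ 2 := by
          rw [cutoff_self hG.preconnected, one_mul]
      _ ≤ (k - lam) * ∑ x ∈ S, (cutoff G a z R x * v x) ^ 2 := by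
          gcongr
          exact single_le_sum (fun x _ => sq_nonneg (cutoff G a z R x * v x)) hz
      _ ≤ 1 / R ^ 2 * N / 2 * ∑' x, v x ^ 2 :=
          sub_mul_sum_sq_le_of_eigenvector ha has hdeg hk hv heq hS (by positivity)
            fun x y h => mul_cutoff_sub_sq_le hG.preconnected ha has z hR h
      _ = (N / 2 * ∑' x, v x ^ 2) / R ^ 2 := by ring
  have hvz : v z ^ 2 = 0 :=
    le_antisymm (nonpos_of_mul_nonpos_right (nonpos_of_forall_le_div_sq hdecay) hk_lam)
      (sq_nonneg _)
  exact pow_eq_zero_iff two_ne_zero |>.1 hvz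
end

section
/- Counterexample computation: Let G be the half-line graph with V = ℕ \ {0,1}, n ∼ n+1, vertex weight ω_n = 1/(n log n), conductance c ≡ 1 on edges, so a_{n,n+1} = n(n+1) log n · log(n+1). Then 1/√(a_{n,n+1}) ∼ 1/(n log n) as n → ∞, hence Σ_k 1/√(a_{k,k+1}) = ∞ and the path metric δ_a is complete, while the potential W(n) = 2n²log²n − n log n[(n+1)log(n+1) + (n−1)log(n−1)] satisfies W(n) ∼ −log n, so W is unbounded below. -/
open Finset Filter Topology

/-- The edge weight `a_{n,n+1} = c/(ω_n ω_{n+1}) = n(n+1)·log n·log(n+1)` of the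
half-line graph with `ω_n = 1/(n log n)` and `c ≡ 1`. -/
noncomputable def aHL (n : ℕ) : ℝ :=
  (n : ℝ) * ((n : ℝ) + 1) * Real.log n * Real.log ((n : ℝ) + 1)

/-- The potential `W(n) = 2n²log²n − n·log n·[(n+1)log(n+1) + (n−1)log(n−1)]`. -/
noncomputable def WHL (n : ℕ) : ℝ :=
  2 * (n : ℝ) ^ 2 * (Real.log n) ^ 2 -
    (n : ℝ) * Real.log n *
      (((n : ℝ) + 1) * Real.log ((n : ℝ) + 1) + ((n : ℝ) - 1) * Real.log ((n : ℝ) - 1))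

/-! Since `log (n + 1) ~ log n`, we have `a_{n,n+1} ~ (n log n)²`, hence
`1/√a_{n,n+1} ~ 1/(n log n)`, whose series diverges by Cauchy condensation (the condensed
series is harmonic). Measuring the logarithms in `W` against `log n` gives
`W(n) = -log n · (n² log (1 - 1/n²) + n log (1 + 1/n) - n log (1 - 1/n))`,
and the bracket tends to `-1 + 1 + 1 = 1`. -/

open Asymptotics

lemma not_summable_one_div_natCast_mul_log :
    ¬ Summable fun n : ℕ => 1 / ((n : ℝ) * Real.log n) := by
  have hlog2 : 0 < Real.log 2 := Real.log_pos one_lt_two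
  have hnonneg : 0 ≤ᶠ[atTop] fun n : ℕ => 1 / ((n : ℝ) * Real.log n) :=
    Eventually.of_forall fun n => by
      have := Real.log_natCast_nonneg n
      positivity
  have hanti : ∀ᶠ n : ℕ in atTop,
      1 / (((n + 1 : ℕ) : ℝ) * Real.log (n + 1 : ℕ)) ≤ 1 / ((n : ℝ) * Real.log n) := by
    filter_upwards [eventually_ge_atTop 2] with n hn
    have hn' : (2 : ℝ) ≤ n := by exact_mod_cast hn
    have hlog : 0 < Real.log n := Real.log_pos (by linarith)
    gcongr <;> omega
  rw [← summable_condensed_iff_of_eventually_nonneg hnonneg hanti]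
  have hcondensed :
      (fun k : ℕ => (2 : ℝ) ^ k * (1 / (((2 ^ k : ℕ) : ℝ) * Real.log (2 ^ k : ℕ))))
        = fun k : ℕ => (Real.log 2)⁻¹ * (1 / (k : ℝ)) := by
    ext k
    push_cast
    rw [Real.log_pow]
    field_simp
  rw [hcondensed, summable_mul_left_iff (inv_ne_zero hlog2.ne')]
  exact Real.not_summable_one_div_natCast

lemma isEquivalent_natCast_add_one :
    (fun n : ℕ => (n : ℝ) + 1) ~[atTop] fun n : ℕ => (n : ℝ) :=
  IsEquivalent.refl.add_const_of_norm_tendsto_atTop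
    (tendsto_norm_atTop_atTop.comp tendsto_natCast_atTop_atTop)

lemma isEquivalent_aHL : aHL ~[atTop] fun n : ℕ => ((n : ℝ) * Real.log n) ^ 2 := by
  have hsucc := isEquivalent_natCast_add_one
  have hn := IsEquivalent.refl (u := fun n : ℕ => (n : ℝ)) (l := atTop)
  have hlog := IsEquivalent.refl (u := fun n : ℕ => Real.log n) (l := atTop)
  have := ((hn.mul hsucc).mul hlog).mul (hsucc.log tendsto_natCast_atTop_atTop)
  convert this using 1
  · ext n
    simp only [aHL, Pi.mul_apply]
  · ext n
    simp only [Pi.mul_apply]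
    ring

lemma isEquivalent_one_div_sqrt_aHL :
    (fun n : ℕ => 1 / Real.sqrt (aHL n)) ~[atTop]
      fun n : ℕ => 1 / ((n : ℝ) * Real.log n) := by
  have hsq : (fun n => Real.sqrt (aHL n)) ~[atTop] fun n : ℕ => (n : ℝ) * Real.log n := by
    have := isEquivalent_aHL.rpow (fun n => sq_nonneg _) (r := 1 / 2)
    convert this using 1 <;> ext n
    · simp [Real.sqrt_eq_rpow]
    · have := Real.log_natCast_nonneg n
      rw [Pi.pow_apply, ← Real.sqrt_eq_rpow, Real.sqrt_sq (by positivity)]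
  simpa only [one_div, Pi.inv_def] using hsq.inv

lemma WHL_eq (n : ℕ) (hn : 2 ≤ n) :
    WHL n = -Real.log n * ((n : ℝ) ^ 2 * Real.log (1 + -1 / (n : ℝ) ^ 2)
      + n * Real.log (1 + 1 / n) - n * Real.log (1 + -1 / n)) := by
  have hn' : (2 : ℝ) ≤ n := by exact_mod_cast hn
  have hsq : (1 : ℝ) + -1 / (n : ℝ) ^ 2 = ((n + 1) * (n - 1)) / (n : ℝ) ^ 2 := by
    field_simp; ring
  have hplus : (1 : ℝ) + 1 / n = (n + 1) / n := by field_simp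
  have hminus : (1 : ℝ) + -1 / n = (n - 1) / n := by field_simp; ring
  rw [hsq, hplus, hminus, Real.log_div (by nlinarith) (by positivity),
    Real.log_mul (by linarith) (by linarith), Real.log_pow,
    Real.log_div (by linarith) (by linarith), Real.log_div (by linarith) (by linarith), WHL]
  push_cast
  ring

lemma tendsto_WHL_div_neg_log :
    Tendsto (fun n : ℕ => WHL n / -Real.log n) atTop (𝓝 1) := by
  have hnat : Tendsto (fun n : ℕ => (n : ℝ)) atTop atTop := tendsto_natCast_atTop_atTop
  have hsq := (Real.tendsto_mul_log_one_add_div_atTop (-1)).comp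
    ((tendsto_pow_atTop two_ne_zero).comp hnat)
  have hplus := (Real.tendsto_mul_log_one_add_div_atTop 1).comp hnat
  have hminus := (Real.tendsto_mul_log_one_add_div_atTop (-1)).comp hnat
  have := (hsq.add hplus).sub hminus
  rw [show (-1 : ℝ) + 1 - -1 = 1 by norm_num] at this
  refine this.congr' ?_
  filter_upwards [eventually_ge_atTop 2] with n hn
  have hlog : Real.log n ≠ 0 := (Real.log_pos (by exact_mod_cast hn)).ne'
  rw [WHL_eq n hn, mul_div_cancel_left₀ _ (neg_ne_zero.mpr hlog)]
  simp only [Function.comp_apply]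

lemma tendsto_sum_Icc_one_div_sqrt_aHL :
    Tendsto (fun n : ℕ => ∑ k ∈ Icc 2 n, 1 / Real.sqrt (aHL k)) atTop atTop := by
  have hdiv : ¬ Summable fun n : ℕ => 1 / Real.sqrt (aHL n) :=
    isEquivalent_one_div_sqrt_aHL.summable_iff_nat.not.mpr not_summable_one_div_natCast_mul_log
  have hrange := (not_summable_iff_tendsto_nat_atTop_of_nonneg fun n => by positivity).mp hdiv
  refine (hrange.comp (tendsto_add_atTop_nat 1)).congr fun n =>
    (sum_subset (fun k hk => ?_) fun k hk hk' => ?_).symm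
  · simp only [mem_Icc, mem_range] at hk ⊢
    omega
  · have : k < 2 := by simp only [mem_range, mem_Icc] at hk hk'; omega
    -- `aHL 0 = aHL 1 = 0`, and `1 / √0 = 0`
    interval_cases k <;> simp [aHL]

lemma tendsto_WHL_atBot : Tendsto WHL atTop atBot := by
  have hequiv : (fun n : ℕ => -Real.log n) ~[atTop] WHL :=
    (isEquivalent_of_tendsto_one tendsto_WHL_div_neg_log).symm
  exact hequiv.tendsto_atBot <|
    tendsto_neg_atTop_atBot.comp (Real.tendsto_log_atTop.comp tendsto_natCast_atTop_atTop)

/-- counterexample computation: `1/√(a_{n,n+1}) ∼ 1/(n log n)`, the series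
`Σ 1/√(a_{k,k+1})` diverges (so `δ_a` is complete), while `W(n) ∼ −log n`, so `W` is
unbounded below. -/
theorem stmt15 :
    Tendsto (fun n : ℕ => (1 / Real.sqrt (aHL n)) / (1 / ((n : ℝ) * Real.log n)))
        atTop (𝓝 1) ∧
    Tendsto (fun n : ℕ => ∑ k ∈ Finset.Icc 2 n, 1 / Real.sqrt (aHL k)) atTop atTop ∧
    Tendsto (fun n : ℕ => WHL n / (-Real.log n)) atTop (𝓝 1) ∧
    ∀ M : ℝ, ∃ n : ℕ, WHL n < M := by
  have hne : ∀ᶠ n : ℕ in atTop, 1 / ((n : ℝ) * Real.log n) ≠ 0 := by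
    filter_upwards [eventually_ge_atTop 2] with n hn
    have hn' : (1 : ℝ) < n := by exact_mod_cast hn
    have := Real.log_pos hn'
    positivity
  exact ⟨(isEquivalent_iff_tendsto_one hne).mp isEquivalent_one_div_sqrt_aHL,
    tendsto_sum_Icc_one_div_sqrt_aHL, tendsto_WHL_div_neg_log,
    fun M => (tendsto_WHL_atBot.eventually_lt_atBot M).exists⟩
end
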